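/- arXiv:2508.13230 — 7 statements merged into one kernel-verified Lean document; each statement's English description precedes it below -/
import Mathlib

section
/- For every r ∈ (0,1], the quantity −p^ε(r) converges to V(r) as ε → 0⁺; that is, lim_{ε→0⁺} (1/ε) · r^{−(n−1)} e^{−r/ε} ∫_0^r s^{n−1} e^{s/ε} V(s) ds = V(r). -/
/-!
Substituting, `-p^ε(r) = (1/ε) ∫_0^r e^{(s-r)/ε} g(s) ds` with `g(s) = (s/r)^{n-1} V(s)` and
`g(r) = V(r)`. The kernel `(1/ε) e^{(s-r)/ε}` has mass `1 - e^{-r/ε} → 1` on `[0,r]` and first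
moment `∫ (r-s) e^{(s-r)/ε}/ε ≤ ε` about `r`, while `|g(s) - g(r)| ≤ L (r - s)` because `V` is
Lipschitz; hence the error is at most `L ε`.
-/

open Filter Set Real MeasureTheory

lemma integral_exp_sub_div (r : ℝ) {ε : ℝ} (hε : 0 < ε) :
    ∫ s in (0:ℝ)..r, exp ((s - r) / ε) = ε * (1 - exp (-r / ε)) := by
  simp only [sub_div]
  rw [intervalIntegral.integral_comp_div_sub (fun x => exp x) hε.ne', integral_exp]
  simp only [zero_div, zero_sub, sub_self, exp_zero, smul_eq_mul, neg_div]

lemma integral_sub_mul_exp_sub_div_le {r ε : ℝ} (hr : 0 ≤ r) (hε : 0 < ε) :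
    ∫ s in (0:ℝ)..r, (r - s) * exp ((s - r) / ε) ≤ ε ^ 2 := by
  have hderiv : ∀ x : ℝ, HasDerivAt (fun s => (ε * (r - s) + ε ^ 2) * exp ((s - r) / ε))
      ((r - x) * exp ((x - r) / ε)) x := by
    intro x
    have hlin : HasDerivAt (fun s : ℝ => ε * (r - s) + ε ^ 2) (-ε) x := by
      simpa using (((hasDerivAt_id x).const_sub r).const_mul ε).add_const (ε ^ 2)
    have harg : HasDerivAt (fun s : ℝ => (s - r) / ε) (1 / ε) x := by
      simpa using ((hasDerivAt_id x).sub_const r).div_const ε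
    exact (hlin.mul harg.exp).congr_deriv (by field_simp; ring)
  rw [intervalIntegral.integral_eq_sub_of_hasDerivAt (fun x _ => hderiv x)
    (by apply Continuous.intervalIntegrable; fun_prop)]
  simp only [sub_self, zero_div, exp_zero, mul_zero, zero_add, mul_one, sub_zero]
  have : 0 ≤ (ε * r + ε ^ 2) * exp ((0 - r) / ε) := by positivity
  linarith

lemma abs_kernel_average_sub_le {g : ℝ → ℝ} {r ε L : ℝ} (hr : 0 < r) (hε : 0 < ε)
    (hgi : IntervalIntegrable g volume 0 r)
    (hg : ∀ s ∈ Icc 0 r, |g s - g r| ≤ L * (r - s)) :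
    |(1 / ε) * (∫ s in (0:ℝ)..r, exp ((s - r) / ε) * g s) - g r * (1 - exp (-r / ε))|
      ≤ L * ε := by
  have hL : 0 ≤ L := by
    have := (abs_nonneg _).trans (hg 0 ⟨le_rfl, hr.le⟩)
    rw [sub_zero] at this
    exact nonneg_of_mul_nonneg_left this hr
  have hexp : Continuous fun s => exp ((s - r) / ε) := by fun_prop
  have hmass : g r * (1 - exp (-r / ε)) = (1 / ε) * ∫ s in (0:ℝ)..r, exp ((s - r) / ε) * g r := by
    rw [intervalIntegral.integral_mul_const, integral_exp_sub_div r hε]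
    field_simp
  have hpointwise : ∀ s ∈ Ioc 0 r,
      ‖exp ((s - r) / ε) * g s - exp ((s - r) / ε) * g r‖ ≤ L * ((r - s) * exp ((s - r) / ε)) := by
    intro s hs
    rw [← mul_sub, norm_mul, norm_of_nonneg (exp_nonneg _), Real.norm_eq_abs]
    calc exp ((s - r) / ε) * |g s - g r| ≤ exp ((s - r) / ε) * (L * (r - s)) :=
          mul_le_mul_of_nonneg_left (hg s (Ioc_subset_Icc_self hs)) (exp_nonneg _)
      _ = L * ((r - s) * exp ((s - r) / ε)) := by ring
  have herror : |∫ s in (0:ℝ)..r, (exp ((s - r) / ε) * g s - exp ((s - r) / ε) * g r)|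
      ≤ L * ε ^ 2 := by
    refine (intervalIntegral.norm_integral_le_of_norm_le hr.le
      (ae_of_all _ hpointwise) (by apply Continuous.intervalIntegrable; fun_prop)).trans ?_
    rw [intervalIntegral.integral_const_mul]
    exact mul_le_mul_of_nonneg_left (integral_sub_mul_exp_sub_div_le hr.le hε) hL
  rw [hmass, ← mul_sub, ← intervalIntegral.integral_sub
    (hgi.continuousOn_mul hexp.continuousOn) (by apply Continuous.intervalIntegrable; fun_prop),
    abs_mul, abs_of_pos (one_div_pos.mpr hε)]
  calc 1 / ε * |∫ s in (0:ℝ)..r, (exp ((s - r) / ε) * g s - exp ((s - r) / ε) * g r)|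
      ≤ 1 / ε * (L * ε ^ 2) := mul_le_mul_of_nonneg_left herror (one_div_pos.mpr hε).le
    _ = L * ε := by field_simp

lemma tendsto_kernel_average {g : ℝ → ℝ} {r L : ℝ} (hr : 0 < r)
    (hgi : IntervalIntegrable g volume 0 r)
    (hg : ∀ s ∈ Icc 0 r, |g s - g r| ≤ L * (r - s)) :
    Tendsto (fun ε => (1 / ε) * ∫ s in (0:ℝ)..r, exp ((s - r) / ε) * g s)
      (nhdsWithin 0 (Ioi 0)) (nhds (g r)) := by
  have hexp : Tendsto (fun ε => exp (-r / ε)) (nhdsWithin 0 (Ioi 0)) (nhds 0) := by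
    have : Tendsto (fun ε => r * ε⁻¹) (nhdsWithin 0 (Ioi 0)) atTop :=
      tendsto_inv_nhdsGT_zero.const_mul_atTop hr
    simpa [Function.comp_def, neg_div, div_eq_mul_inv] using
      tendsto_exp_neg_atTop_nhds_zero.comp this
  have hmass : Tendsto (fun ε => g r * (1 - exp (-r / ε))) (nhdsWithin 0 (Ioi 0)) (nhds (g r)) := by
    simpa using ((tendsto_const_nhds (x := (1:ℝ))).sub hexp).const_mul (g r)
  have hlin : Tendsto (fun ε => L * ε) (nhdsWithin 0 (Ioi 0)) (nhds 0) :=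
    tendsto_nhdsWithin_of_tendsto_nhds (by simpa using (continuous_const_mul L).tendsto 0)
  have herror : Tendsto (fun ε => (1 / ε) * (∫ s in (0:ℝ)..r, exp ((s - r) / ε) * g s)
      - g r * (1 - exp (-r / ε))) (nhdsWithin 0 (Ioi 0)) (nhds 0) :=
    squeeze_zero_norm' (eventually_nhdsWithin_of_forall fun ε hε =>
      abs_kernel_average_sub_le hr hε hgi hg) hlin
  simpa using hmass.add herror

lemma abs_div_pow_mul_sub_le (m : ℕ) {s r a b K : ℝ} (hs : 0 ≤ s) (hsr : s ≤ r) (hr : 0 < r)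
    (hab : |a - b| ≤ K * (r - s)) :
    |(s / r) ^ m * a - b| ≤ (K + m * |b| / r) * (r - s) := by
  have hq0 : 0 ≤ (s / r) ^ m := by positivity
  have hq1 : (s / r) ^ m ≤ 1 := pow_le_one₀ (by positivity) ((div_le_one hr).mpr hsr)
  have hbernoulli : 1 - (s / r) ^ m ≤ m * (r - s) / r := by
    have := one_add_mul_le_pow (show (-2 : ℝ) ≤ s / r - 1 by
      linarith [div_nonneg hs hr.le]) m
    rw [add_sub_cancel] at this
    have : (m : ℝ) * (s / r - 1) = -(m * (r - s) / r) := by field_simp; ring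
    linarith
  calc |(s / r) ^ m * a - b| = |(s / r) ^ m * (a - b) - b * (1 - (s / r) ^ m)| := by ring_nf
    _ ≤ (s / r) ^ m * |a - b| + |b| * (1 - (s / r) ^ m) := by
      refine (abs_sub _ _).trans (le_of_eq ?_)
      rw [abs_mul, abs_mul, abs_of_nonneg hq0, abs_of_nonneg (sub_nonneg.mpr hq1)]
    _ ≤ 1 * (K * (r - s)) + |b| * (m * (r - s) / r) := by gcongr
    _ = (K + m * |b| / r) * (r - s) := by ring

theorem eikonal_minus_p_eps_tendsto_V_general
    (n : ℕ) (V : ℝ → ℝ)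
    (hVlip : ∃ K : NNReal, LipschitzOnWith K V (Set.Icc 0 1))
    (r : ℝ) (hr : r ∈ Set.Ioc (0:ℝ) 1) :
    Filter.Tendsto
      (fun ε : ℝ =>
        (1/ε) * (r ^ (n-1))⁻¹ * Real.exp (-r/ε) *
          ∫ s in (0:ℝ)..r, s ^ (n-1) * Real.exp (s/ε) * V s)
      (nhdsWithin 0 (Set.Ioi 0)) (nhds (V r)) := by
  obtain ⟨K, hK⟩ := hVlip
  obtain ⟨hr0, hr1⟩ := hr
  set g : ℝ → ℝ := fun s => (s / r) ^ (n - 1) * V s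
  have hsub : Icc 0 r ⊆ Icc (0:ℝ) 1 := Icc_subset_Icc_right hr1
  have hgr : g r = V r := by simp [g, div_self hr0.ne']
  have hgi : IntervalIntegrable g volume 0 r := by
    refine ContinuousOn.intervalIntegrable ?_
    rw [uIcc_of_le hr0.le]
    exact ((continuousOn_id.div_const r).pow _).mul (hK.continuousOn.mono hsub)
  have hg : ∀ s ∈ Icc 0 r, |g s - g r| ≤ (K + (n - 1 : ℕ) * |V r| / r) * (r - s) := by
    intro s hs
    rw [hgr]
    refine abs_div_pow_mul_sub_le (n - 1) hs.1 hs.2 hr0 ?_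
    have := hK.dist_le_mul s (hsub hs) r (hsub ⟨hr0.le, le_rfl⟩)
    rwa [Real.dist_eq, Real.dist_eq, abs_sub_comm s, abs_of_nonneg (sub_nonneg.mpr hs.2)] at this
  have hkernel_form : ∀ ε : ℝ, (1 / ε) * ∫ s in (0:ℝ)..r, exp ((s - r) / ε) * g s =
      (1/ε) * (r ^ (n-1))⁻¹ * exp (-r/ε) * ∫ s in (0:ℝ)..r, s ^ (n-1) * exp (s/ε) * V s := by
    intro ε
    rw [mul_assoc (1 / ε) _ (exp _), mul_assoc (1 / ε)]
    congr 1
    rw [← intervalIntegral.integral_const_mul]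
    refine intervalIntegral.integral_congr fun s _ => ?_
    simp only [g, div_pow, sub_div, exp_sub, neg_div, exp_neg]
    field_simp
  simpa only [hgr, hkernel_form] using tendsto_kernel_average hr0 hgi hg

/-- For every `r ∈ (0,1]`, the quantity `-p^ε(r)` converges to `V r` as
`ε → 0⁺`, where `p^ε(r) = -(1/ε) · r^{-(n-1)} e^{-r/ε} ∫_0^r s^{n-1} e^{s/ε} V(s) ds`. -/
theorem eikonal_minus_p_eps_tendsto_V
    (n : ℕ) (hn : 1 ≤ n) (V : ℝ → ℝ)
    (hV0 : ∀ s ∈ Set.Icc (0:ℝ) 1, 0 ≤ V s)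
    (hVb : ∃ M : ℝ, ∀ s ∈ Set.Icc (0:ℝ) 1, |V s| ≤ M)
    (hVlip : ∃ K : NNReal, LipschitzOnWith K V (Set.Icc 0 1))
    (r : ℝ) (hr : r ∈ Set.Ioc (0:ℝ) 1) :
    Filter.Tendsto
      (fun ε : ℝ =>
        (1/ε) * (r ^ (n-1))⁻¹ * Real.exp (-r/ε) *
          ∫ s in (0:ℝ)..r, s ^ (n-1) * Real.exp (s/ε) * V s)
      (nhdsWithin 0 (Set.Ioi 0)) (nhds (V r)) :=
  eikonal_minus_p_eps_tendsto_V_general n V hVlip r hr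
end

section
/- The functions u^ε converge uniformly to u on [0,1] as ε → 0⁺: for every δ > 0 there exists ε₀ > 0 such that for all ε ∈ (0, ε₀) and all r ∈ [0,1], |u^ε(r) − u(r)| ≤ δ. -/
/-!
Writing `-p^ε(s) = ∫₀ˢ k(t) V(t) dt` with the kernel `k(t) = ε⁻¹ (t/s)^(n-1) e^{(t-s)/ε}`, the
function `-p^ε(s)` is an average of `V` over `[0, s]` concentrated within `O(ε)` of `s`: comparing
`k` with `ε⁻¹ e^{(t-s)/ε}` (Bernoulli's inequality for `(t/s)^(n-1)`) shows that its mass lies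
between `1 - e^{-s/ε} - (n-1)ε/s` and `1 - e^{-s/ε}` and that `∫ (s - t) k(t) dt ≤ ε`. For `V`
bounded by `M` and `K`-Lipschitz this gives `|p^ε(s) + V(s)| ≤ Kε + M(e^{-s/ε} + (n-1)ε/s)`, so
`-p^ε → V` pointwise on `(0, 1]` while `|p^ε| ≤ M`. By dominated convergence
`∫₀¹ |p^ε + V| → 0`, and this integral bounds `|u^ε(r) - u(r)|` for every `r ∈ [0, 1]`.
-/

open Filter Set Real MeasureTheory intervalIntegral Topology

theorem tendsto_exp_neg_div_nhdsGT_zero {s : ℝ} (hs : 0 < s) :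
    Tendsto (fun ε => Real.exp (-s/ε)) (𝓝[>] 0) (𝓝 0) := by
  simp only [div_eq_mul_inv]
  exact Real.tendsto_exp_atBot.comp (tendsto_inv_nhdsGT_zero.const_mul_atTop_of_neg (by linarith))

theorem abs_integral_sub_integral_le_integral_abs_sub {f g : ℝ → ℝ} {a b r : ℝ}
    (hf : IntervalIntegrable f volume a b) (hg : IntervalIntegrable g volume a b)
    (har : a ≤ r) (hrb : r ≤ b) :
    |(∫ x in r..b, f x) - ∫ x in r..b, g x| ≤ ∫ x in a..b, |f x - g x| := by
  have hsub : uIcc r b ⊆ uIcc a b := uIcc_subset_uIcc (mem_uIcc_of_le har hrb) right_mem_uIcc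
  rw [← integral_sub (hf.mono_set hsub) (hg.mono_set hsub)]
  exact (abs_integral_le_integral_abs hrb).trans
    (integral_mono_interval har hrb le_rfl (ae_of_all _ fun _ => abs_nonneg _) (hf.sub hg).abs)

/-- `expAverage (n - 1) ε V` is the function `-p^ε`. -/
noncomputable def expAverage (m : ℕ) (ε : ℝ) (W : ℝ → ℝ) (s : ℝ) : ℝ :=
  (1/ε) * (s ^ m)⁻¹ * Real.exp (-s/ε) * ∫ t in (0:ℝ)..s, t ^ m * Real.exp (t/ε) * W t

noncomputable def expKernel (m : ℕ) (ε s t : ℝ) : ℝ :=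
  (1/ε) * (t/s) ^ m * Real.exp ((t - s)/ε)

section expKernel

variable {m : ℕ} {ε s t : ℝ}

theorem expAverage_eq_integral_expKernel (m : ℕ) (ε : ℝ) (W : ℝ → ℝ) (s : ℝ) :
    expAverage m ε W s = ∫ t in (0:ℝ)..s, expKernel m ε s t * W t := by
  rw [expAverage, ← intervalIntegral.integral_const_mul]
  congr 1 with t
  rw [expKernel, div_pow, show (t - s) / ε = -s/ε + t/ε by ring, Real.exp_add]
  ring

theorem continuous_expKernel (m : ℕ) (ε s : ℝ) : Continuous (expKernel m ε s) := by
  unfold expKernel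
  fun_prop

theorem expKernel_nonneg (hε : 0 ≤ ε) (hs : 0 ≤ s) (ht : 0 ≤ t) : 0 ≤ expKernel m ε s t := by
  unfold expKernel
  have := pow_nonneg (div_nonneg ht hs) m
  positivity

theorem expKernel_le_expKernel_zero (hε : 0 ≤ ε) (ht : 0 ≤ t) (hts : t ≤ s) :
    expKernel m ε s t ≤ expKernel 0 ε s t := by
  have hs : 0 ≤ s := ht.trans hts
  have hpow : (t/s) ^ m ≤ 1 := pow_le_one₀ (div_nonneg ht hs) (div_le_one_of_le₀ hts hs)
  unfold expKernel
  rw [pow_zero]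
  gcongr

theorem expKernel_zero_sub_expKernel_le (hε : 0 ≤ ε) (hs : 0 < s) (ht : 0 ≤ t) :
    expKernel 0 ε s t - expKernel m ε s t ≤ m / s * ((s - t) * expKernel 0 ε s t) := by
  have bernoulli : 1 + m * (t/s - 1) ≤ (t/s) ^ m := by
    simpa using one_add_mul_le_pow (a := t/s - 1) (by linarith [div_nonneg ht hs.le]) m
  have h0 := expKernel_nonneg (m := 0) hε hs.le ht
  have key : expKernel 0 ε s t - expKernel m ε s t = (1 - (t/s) ^ m) * expKernel 0 ε s t := by
    simp only [expKernel]; ring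
  rw [key, show m / s * ((s - t) * expKernel 0 ε s t) = -(m * (t/s - 1)) * expKernel 0 ε s t by
    field_simp; ring]
  gcongr
  linarith

theorem integral_expKernel_zero (ε s : ℝ) :
    ∫ t in (0:ℝ)..s, expKernel 0 ε s t = 1 - Real.exp (-s/ε) := by
  have hderiv : ∀ t, HasDerivAt (fun t => Real.exp ((t - s)/ε)) (expKernel 0 ε s t) t := by
    intro t
    refine (((hasDerivAt_id' t).sub_const s).div_const ε).exp.congr_deriv ?_
    simp only [expKernel, pow_zero]; ring
  rw [integral_eq_sub_of_hasDerivAt (fun t _ => hderiv t)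
    ((continuous_expKernel 0 ε s).intervalIntegrable _ _)]
  simp [neg_div]

theorem integral_sub_mul_expKernel_zero (hε : ε ≠ 0) (s : ℝ) :
    ∫ t in (0:ℝ)..s, (s - t) * expKernel 0 ε s t = ε - (s + ε) * Real.exp (-s/ε) := by
  have hderiv : ∀ t, HasDerivAt (fun t => (s - t + ε) * Real.exp ((t - s)/ε))
      ((s - t) * expKernel 0 ε s t) t := by
    intro t
    refine ((((hasDerivAt_id' t).const_sub s).add_const ε).fun_mul
      (((hasDerivAt_id' t).sub_const s).div_const ε).exp).congr_deriv ?_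
    simp only [expKernel, pow_zero]; field_simp; ring
  have hint : IntervalIntegrable (fun t => (s - t) * expKernel 0 ε s t) volume 0 s :=
    ((continuous_const.sub continuous_id).mul (continuous_expKernel 0 ε s)).intervalIntegrable _ _
  rw [integral_eq_sub_of_hasDerivAt (fun t _ => hderiv t) hint]
  simp [neg_div]

end expKernel

section expAverage

variable {m : ℕ} {ε s M : ℝ} {W : ℝ → ℝ}

theorem abs_expAverage_le (hε : 0 < ε) (hs : 0 < s) (hW : IntervalIntegrable W volume 0 s)
    (hWM : ∀ t ∈ Icc 0 s, |W t| ≤ M) : |expAverage m ε W s| ≤ M := by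
  have hM : 0 ≤ M := (abs_nonneg _).trans (hWM s ⟨hs.le, le_rfl⟩)
  rw [expAverage_eq_integral_expKernel]
  calc |∫ t in (0:ℝ)..s, expKernel m ε s t * W t|
      ≤ ∫ t in (0:ℝ)..s, |expKernel m ε s t * W t| := abs_integral_le_integral_abs hs.le
    _ ≤ ∫ t in (0:ℝ)..s, M * expKernel 0 ε s t := by
        refine integral_mono_on hs.le
          (hW.continuousOn_mul (continuous_expKernel m ε s).continuousOn).abs
          (((continuous_expKernel 0 ε s).intervalIntegrable _ _).const_mul _) fun t ht => ?_
        rw [abs_mul, abs_of_nonneg (expKernel_nonneg hε.le hs.le ht.1), mul_comm]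
        exact mul_le_mul (hWM t ht) (expKernel_le_expKernel_zero hε.le ht.1 ht.2)
          (expKernel_nonneg hε.le hs.le ht.1) hM
    _ = M * (1 - Real.exp (-s/ε)) := by
        rw [intervalIntegral.integral_const_mul, integral_expKernel_zero]
    _ ≤ M := by nlinarith [Real.exp_pos (-s/ε)]

theorem abs_expAverage_sub_le (hε : 0 < ε) (hs : 0 < s) (hWM : ∀ t ∈ Icc 0 s, |W t| ≤ M)
    {K : NNReal} (hWlip : LipschitzOnWith K W (Icc 0 s)) :
    |expAverage m ε W s - W s| ≤ K * ε + M * (Real.exp (-s/ε) + m * ε / s) := by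
  have hk : IntervalIntegrable (expKernel m ε s) volume 0 s :=
    (continuous_expKernel m ε s).intervalIntegrable _ _
  have hk₀ : IntervalIntegrable (expKernel 0 ε s) volume 0 s :=
    (continuous_expKernel 0 ε s).intervalIntegrable _ _
  have hmom : IntervalIntegrable (fun t => (s - t) * expKernel 0 ε s t) volume 0 s :=
    ((continuous_const.sub continuous_id).mul (continuous_expKernel 0 ε s)).intervalIntegrable _ _
  have hW : IntervalIntegrable W volume 0 s := hWlip.continuousOn.intervalIntegrable_of_Icc hs.le
  have hkW : IntervalIntegrable (fun t => expKernel m ε s t * W t) volume 0 s :=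
    hW.continuousOn_mul (continuous_expKernel m ε s).continuousOn
  set I := ∫ t in (0:ℝ)..s, expKernel m ε s t
  have hmass_le : I ≤ 1 - Real.exp (-s/ε) := by
    rw [← integral_expKernel_zero]
    exact integral_mono_on hs.le hk hk₀ fun t ht => expKernel_le_expKernel_zero hε.le ht.1 ht.2
  have hmass_ge : 1 - Real.exp (-s/ε) - m * ε / s ≤ I := by
    have h : ∫ t in (0:ℝ)..s, (expKernel 0 ε s t - expKernel m ε s t)
        ≤ ∫ t in (0:ℝ)..s, m / s * ((s - t) * expKernel 0 ε s t) :=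
      integral_mono_on hs.le (hk₀.sub hk) (hmom.const_mul _)
        fun t ht => expKernel_zero_sub_expKernel_le hε.le hs ht.1
    rw [integral_sub hk₀ hk, intervalIntegral.integral_const_mul, integral_expKernel_zero,
      integral_sub_mul_expKernel_zero hε.ne'] at h
    have : m / s * (ε - (s + ε) * Real.exp (-s/ε)) ≤ m * ε / s := by
      rw [div_mul_eq_mul_div]
      gcongr
      nlinarith [Real.exp_pos (-s/ε)]
    linarith
  have hlocal : |∫ t in (0:ℝ)..s, expKernel m ε s t * (W t - W s)| ≤ K * ε := by
    calc |∫ t in (0:ℝ)..s, expKernel m ε s t * (W t - W s)|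
        ≤ ∫ t in (0:ℝ)..s, |expKernel m ε s t * (W t - W s)| := abs_integral_le_integral_abs hs.le
      _ ≤ ∫ t in (0:ℝ)..s, K * ((s - t) * expKernel 0 ε s t) := by
          refine integral_mono_on hs.le
            ((hW.sub intervalIntegrable_const).continuousOn_mul
              (continuous_expKernel m ε s).continuousOn).abs
            (hmom.const_mul _) fun t ht => ?_
          have hlip : |W t - W s| ≤ K * (s - t) := by
            simpa [Real.dist_eq, abs_of_nonpos (sub_nonpos.2 ht.2)] using
              hWlip.dist_le_mul t ht s ⟨hs.le, le_rfl⟩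
          rw [abs_mul, abs_of_nonneg (expKernel_nonneg hε.le hs.le ht.1)]
          calc expKernel m ε s t * |W t - W s| ≤ expKernel 0 ε s t * (K * (s - t)) :=
                mul_le_mul (expKernel_le_expKernel_zero hε.le ht.1 ht.2) hlip (abs_nonneg _)
                  (expKernel_nonneg hε.le hs.le ht.1)
            _ = K * ((s - t) * expKernel 0 ε s t) := by ring
      _ = K * (ε - (s + ε) * Real.exp (-s/ε)) := by
          rw [intervalIntegral.integral_const_mul, integral_sub_mul_expKernel_zero hε.ne']
      _ ≤ K * ε := by
          gcongr
          nlinarith [Real.exp_pos (-s/ε)]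
  have hsplit : ∫ t in (0:ℝ)..s, expKernel m ε s t * (W t - W s)
      = expAverage m ε W s - W s * I := by
    simp_rw [expAverage_eq_integral_expKernel, mul_sub]
    rw [integral_sub hkW (hk.mul_const _), intervalIntegral.integral_mul_const, mul_comm]
  have hWs : |W s| ≤ M := hWM s ⟨hs.le, le_rfl⟩
  have hI : 0 ≤ 1 - I := by linarith [Real.exp_pos (-s/ε)]
  calc |expAverage m ε W s - W s|
      = |(∫ t in (0:ℝ)..s, expKernel m ε s t * (W t - W s)) - W s * (1 - I)| := by
        congr 1
        linear_combination -hsplit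
    _ ≤ |∫ t in (0:ℝ)..s, expKernel m ε s t * (W t - W s)| + |W s| * (1 - I) :=
        (abs_sub _ _).trans_eq (by rw [abs_mul, abs_of_nonneg hI])
    _ ≤ K * ε + M * (Real.exp (-s/ε) + m * ε / s) :=
        add_le_add hlocal (mul_le_mul hWs (by linarith) hI ((abs_nonneg _).trans hWs))

end expAverage

section convergence

variable {m : ℕ} {ε b M : ℝ} {W : ℝ → ℝ}

theorem tendsto_abs_expAverage_sub {s : ℝ} (hs : 0 < s) (hWM : ∀ t ∈ Icc 0 s, |W t| ≤ M)
    {K : NNReal} (hWlip : LipschitzOnWith K W (Icc 0 s)) :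
    Tendsto (fun ε => |expAverage m ε W s - W s|) (𝓝[>] 0) (𝓝 0) := by
  have hid : Tendsto (fun ε : ℝ => ε) (𝓝[>] 0) (𝓝 0) := nhdsWithin_le_nhds
  have hbound : Tendsto (fun ε => K * ε + M * (Real.exp (-s/ε) + m * ε / s)) (𝓝[>] 0) (𝓝 0) := by
    simpa using (hid.const_mul (K : ℝ)).add
      (((tendsto_exp_neg_div_nhdsGT_zero hs).add ((hid.const_mul (m : ℝ)).div_const s)).const_mul M)
  exact squeeze_zero' (Eventually.of_forall fun _ => abs_nonneg _)
    (eventually_mem_nhdsWithin.mono fun ε hε => abs_expAverage_sub_le hε hs hWM hWlip) hbound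

theorem continuousOn_expAverage (hb : 0 ≤ b) (hW : ContinuousOn W (Icc 0 b)) :
    ContinuousOn (expAverage m ε W) (Ioc 0 b) := by
  have hint : IntegrableOn (fun t => t ^ m * Real.exp (t/ε) * W t) (uIcc 0 b) := by
    rw [uIcc_of_le hb]
    exact ((Continuous.continuousOn (by fun_prop)).mul hW).integrableOn_Icc
  have hprim := continuousOn_primitive_interval hint
  rw [uIcc_of_le hb] at hprim
  refine ContinuousOn.mul ?_ (hprim.mono Ioc_subset_Icc_self)
  exact ((continuousOn_const.mul ((continuousOn_pow m).inv₀ fun s hs => pow_ne_zero m hs.1.ne')).mul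
    (Continuous.continuousOn (by fun_prop)))

theorem intervalIntegrable_expAverage (hε : 0 < ε) (hb : 0 ≤ b) (hW : ContinuousOn W (Icc 0 b))
    (hWM : ∀ t ∈ Icc 0 b, |W t| ≤ M) : IntervalIntegrable (expAverage m ε W) volume 0 b := by
  rw [intervalIntegrable_iff_integrableOn_Ioc_of_le hb]
  refine Integrable.of_bound ((continuousOn_expAverage hb hW).aestronglyMeasurable
    measurableSet_Ioc) M ((ae_restrict_iff' measurableSet_Ioc).2 (ae_of_all _ fun s hs => ?_))
  exact abs_expAverage_le hε hs.1 ((hW.mono (Icc_subset_Icc_right hs.2)).intervalIntegrable_of_Icc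
    hs.1.le) fun t ht => hWM t ⟨ht.1, ht.2.trans hs.2⟩

theorem tendsto_integral_abs_expAverage_sub (hb : 0 ≤ b) (hWM : ∀ t ∈ Icc 0 b, |W t| ≤ M)
    {K : NNReal} (hWlip : LipschitzOnWith K W (Icc 0 b)) :
    Tendsto (fun ε => ∫ s in (0:ℝ)..b, |expAverage m ε W s - W s|) (𝓝[>] 0) (𝓝 0) := by
  have hW := hWlip.continuousOn
  have hsub : ∀ s ∈ Ioc 0 b, Icc 0 s ⊆ Icc 0 b := fun s hs => Icc_subset_Icc_right hs.2
  have hdom : Tendsto (fun ε => ∫ s in (0:ℝ)..b, |expAverage m ε W s - W s|) (𝓝[>] 0)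
      (𝓝 (∫ _ in (0:ℝ)..b, (0:ℝ))) := by
    refine tendsto_integral_filter_of_dominated_convergence (fun _ => 2 * M) ?_ ?_
      intervalIntegrable_const ?_ <;> rw [uIoc_of_le hb]
    · exact Eventually.of_forall fun ε =>
        ((continuousOn_expAverage hb hW).sub (hW.mono Ioc_subset_Icc_self)).abs
          |>.aestronglyMeasurable measurableSet_Ioc
    · refine eventually_mem_nhdsWithin.mono fun ε hε => ae_of_all _ fun s hs => ?_
      have hA := abs_expAverage_le (m := m) hε hs.1
        ((hW.mono (hsub s hs)).intervalIntegrable_of_Icc hs.1.le) fun t ht => hWM t (hsub s hs ht)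
      have hWs := hWM s (Ioc_subset_Icc_self hs)
      rw [Real.norm_eq_abs, abs_abs]
      linarith [abs_sub (expAverage m ε W s) (W s)]
    · exact ae_of_all _ fun s hs => tendsto_abs_expAverage_sub hs.1
        (fun t ht => hWM t (hsub s hs ht)) (hWlip.mono (hsub s hs))
  simpa using hdom

end convergence

theorem eikonal_u_eps_tendsto_u_uniformly_general
    (n : ℕ) (V : ℝ → ℝ)
    (hVb : ∃ M : ℝ, ∀ s ∈ Set.Icc (0:ℝ) 1, |V s| ≤ M)
    (hVlip : ∃ K : NNReal, LipschitzOnWith K V (Set.Icc 0 1)) :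
    ∀ δ : ℝ, 0 < δ → ∃ ε₀ : ℝ, 0 < ε₀ ∧
      ∀ ε : ℝ, 0 < ε → ε < ε₀ → ∀ r ∈ Set.Icc (0:ℝ) 1,
        |(∫ s in r..(1:ℝ),
            (1/ε) * (s ^ (n-1))⁻¹ * Real.exp (-s/ε) *
              ∫ t in (0:ℝ)..s, t ^ (n-1) * Real.exp (t/ε) * V t) -
          ∫ s in r..(1:ℝ), V s| ≤ δ := by
  obtain ⟨M, hM⟩ := hVb
  obtain ⟨K, hK⟩ := hVlip
  intro δ hδ
  obtain ⟨ε₀, hε₀, hsmall⟩ := mem_nhdsGT_iff_exists_Ioo_subset.1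
    ((tendsto_integral_abs_expAverage_sub (m := n - 1) zero_le_one hM hK).eventually
      (ge_mem_nhds hδ))
  refine ⟨ε₀, hε₀, fun ε hε hεε₀ r hr => ?_⟩
  exact (abs_integral_sub_integral_le_integral_abs_sub
    (intervalIntegrable_expAverage hε zero_le_one hK.continuousOn hM)
    (hK.continuousOn.intervalIntegrable_of_Icc zero_le_one) hr.1 hr.2).trans (hsmall ⟨hε, hεε₀⟩)

/-- The functions `u^ε` converge uniformly to `u` on `[0,1]` as `ε → 0⁺`,
where `u^ε(r) = ∫_r^1 (-p^ε(s)) ds` with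
`p^ε(s) = -(1/ε) · s^{-(n-1)} e^{-s/ε} ∫_0^s t^{n-1} e^{t/ε} V(t) dt`,
and `u(r) = ∫_r^1 V(s) ds`. -/
theorem eikonal_u_eps_tendsto_u_uniformly
    (n : ℕ) (hn : 1 ≤ n) (V : ℝ → ℝ)
    (hV0 : ∀ s ∈ Set.Icc (0:ℝ) 1, 0 ≤ V s)
    (hVb : ∃ M : ℝ, ∀ s ∈ Set.Icc (0:ℝ) 1, |V s| ≤ M)
    (hVlip : ∃ K : NNReal, LipschitzOnWith K V (Set.Icc 0 1)) :
    ∀ δ : ℝ, 0 < δ → ∃ ε₀ : ℝ, 0 < ε₀ ∧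
      ∀ ε : ℝ, 0 < ε → ε < ε₀ → ∀ r ∈ Set.Icc (0:ℝ) 1,
        |(∫ s in r..(1:ℝ),
            (1/ε) * (s ^ (n-1))⁻¹ * Real.exp (-s/ε) *
              ∫ t in (0:ℝ)..s, t ^ (n-1) * Real.exp (t/ε) * V t) -
          ∫ s in r..(1:ℝ), V s| ≤ δ :=
  eikonal_u_eps_tendsto_u_uniformly_general n V hVb hVlip
end

section
/- For every ε > 0 and every r ∈ (0,1], |p^ε(r)| ≤ M, where M = sup_{s ∈ [0,1]} V(s); in particular the family {u^ε}_{ε>0} is uniformly Lipschitz on [0,1] with Lipschitz constant M. -/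
/-!
In the integral defining `p^ε(r)`, bound `|V| ≤ M` and `s ^ (n - 1) ≤ r ^ (n - 1)`; the remaining
weight `exp (s / ε)` integrates to `ε (exp (r / ε) - 1)`, which the prefactor turns into
`|p^ε(r)| ≤ M (1 - exp (-r / ε)) ≤ M`. Then `u^ε(x) - u^ε(y) = ∫_x^y (-p^ε)` is the integral of a
function bounded by `M`, and `p^ε` is integrable on `(0, 1]` because it is continuous there and
bounded.
-/

open Filter Set Real MeasureTheory

noncomputable def radialFlux (k : ℕ) (V : ℝ → ℝ) (ε r : ℝ) : ℝ :=
  -(1 / ε) * (r ^ k)⁻¹ * exp (-r / ε) * ∫ s in (0:ℝ)..r, s ^ k * exp (s / ε) * V s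

theorem integral_exp_div {ε : ℝ} (hε : ε ≠ 0) (a b : ℝ) :
    ∫ s in a..b, exp (s / ε) = ε * (exp (b / ε) - exp (a / ε)) := by
  rw [intervalIntegral.integral_comp_div (fun s => exp s) hε, integral_exp, smul_eq_mul]

theorem abs_integral_pow_mul_exp_div_mul_le {k : ℕ} {V : ℝ → ℝ} {ε r M : ℝ} (hε : 0 < ε)
    (hr : 0 ≤ r) (hV : ∀ s ∈ Ioc 0 r, |V s| ≤ M) :
    |∫ s in (0:ℝ)..r, s ^ k * exp (s / ε) * V s| ≤ M * r ^ k * (ε * (exp (r / ε) - 1)) := by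
  have hpointwise : ∀ s ∈ Ioc 0 r, ‖s ^ k * exp (s / ε) * V s‖ ≤ M * r ^ k * exp (s / ε) := by
    intro s hs
    rw [Real.norm_eq_abs, abs_mul, abs_mul, abs_of_nonneg (pow_nonneg hs.1.le _),
      abs_of_pos (exp_pos _)]
    have hsk : s ^ k ≤ r ^ k := pow_le_pow_left₀ hs.1.le hs.2 k
    calc s ^ k * exp (s / ε) * |V s| ≤ r ^ k * exp (s / ε) * M := by gcongr; exact hV s hs
      _ = M * r ^ k * exp (s / ε) := by ring
  calc |∫ s in (0:ℝ)..r, s ^ k * exp (s / ε) * V s|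
      ≤ ∫ s in (0:ℝ)..r, M * r ^ k * exp (s / ε) :=
        intervalIntegral.norm_integral_le_of_norm_le hr (Eventually.of_forall hpointwise)
          ((by fun_prop : Continuous fun s => M * r ^ k * exp (s / ε)).intervalIntegrable _ _)
    _ = M * r ^ k * (ε * (exp (r / ε) - 1)) := by
        rw [intervalIntegral.integral_const_mul, integral_exp_div hε.ne', zero_div, exp_zero]

theorem abs_radialFlux_le {k : ℕ} {V : ℝ → ℝ} {ε r M : ℝ} (hε : 0 < ε) (hr : 0 < r)
    (hV : ∀ s ∈ Ioc 0 r, |V s| ≤ M) : |radialFlux k V ε r| ≤ M := by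
  have hM : 0 ≤ M := (abs_nonneg _).trans (hV r ⟨hr, le_rfl⟩)
  have hc : 0 < 1 / ε * (r ^ k)⁻¹ * exp (-r / ε) := by positivity
  rw [radialFlux, neg_mul, neg_mul, neg_mul, abs_neg, abs_mul, abs_of_pos hc]
  calc 1 / ε * (r ^ k)⁻¹ * exp (-r / ε) * |∫ s in (0:ℝ)..r, s ^ k * exp (s / ε) * V s|
      ≤ 1 / ε * (r ^ k)⁻¹ * exp (-r / ε) * (M * r ^ k * (ε * (exp (r / ε) - 1))) :=
        mul_le_mul_of_nonneg_left (abs_integral_pow_mul_exp_div_mul_le hε hr.le hV) hc.le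
    _ = M * (1 - exp (-r / ε)) := by
        rw [neg_div, exp_neg]
        field_simp
    _ ≤ M := mul_le_of_le_one_right hM (sub_le_self _ (exp_pos _).le)

theorem continuousOn_radialFlux {k : ℕ} {V : ℝ → ℝ} {b : ℝ}
    (hV : IntervalIntegrable V volume 0 b) (ε : ℝ) :
    ContinuousOn (radialFlux k V ε) (Ioc 0 b) := by
  have hprimitive : ContinuousOn (fun r => ∫ s in (0:ℝ)..r, s ^ k * exp (s / ε) * V s)
      (uIcc 0 b) :=
    intervalIntegral.continuousOn_primitive_interval'
      (hV.continuousOn_mul (by fun_prop : Continuous fun s => s ^ k * exp (s / ε)).continuousOn)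
      left_mem_uIcc
  refine ContinuousOn.mul ?_ (hprimitive.mono (Ioc_subset_Icc_self.trans Icc_subset_uIcc))
  exact (continuousOn_const.mul ((continuous_pow k).continuousOn.inv₀
    fun r hr => pow_ne_zero _ hr.1.ne')).mul (by fun_prop)

theorem IntervalIntegrable.of_continuousOn_Ioc_of_abs_le {g : ℝ → ℝ} {a b M : ℝ}
    (hab : a ≤ b) (hg : ContinuousOn g (Ioc a b)) (hM : ∀ s ∈ Ioc a b, |g s| ≤ M) :
    IntervalIntegrable g volume a b := by
  rw [intervalIntegrable_iff_integrableOn_Ioc_of_le hab]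
  exact ⟨hg.aestronglyMeasurable measurableSet_Ioc, .restrict_of_bounded (C := M)
    measure_Ioc_lt_top ((ae_restrict_iff' measurableSet_Ioc).2 (Eventually.of_forall hM))⟩

theorem abs_integral_sub_integral_le_mul_abs_sub {g : ℝ → ℝ} {a b c x y M : ℝ}
    (hg : IntervalIntegrable g volume a b) (hM : ∀ s ∈ Ioc a b, |g s| ≤ M)
    (hx : x ∈ Icc a b) (hy : y ∈ Icc a b) (hc : c ∈ Icc a b) :
    |(∫ s in x..c, g s) - ∫ s in y..c, g s| ≤ M * |x - y| := by
  have hab : a ≤ b := hx.1.trans hx.2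
  have hint : ∀ {u v}, u ∈ Icc a b → v ∈ Icc a b → IntervalIntegrable g volume u v :=
    fun hu hv => hg.mono_set (uIcc_of_le hab ▸ uIcc_subset_Icc hu hv)
  rw [← intervalIntegral.integral_add_adjacent_intervals (hint hx hy) (hint hy hc),
    add_sub_cancel_right, abs_sub_comm x y]
  exact intervalIntegral.norm_integral_le_of_norm_le_const fun s hs =>
    (Real.norm_eq_abs _).trans_le
      (hM s (Ioc_subset_Ioc (le_min hx.1 hy.1) (max_le hx.2 hy.2) hs))

theorem eikonal_p_eps_bounded_u_eps_lipschitz_general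
    (n : ℕ) (V : ℝ → ℝ)
    (hV0 : ∀ s ∈ Set.Icc (0:ℝ) 1, 0 ≤ V s)
    (hVlip : ∃ K : NNReal, LipschitzOnWith K V (Set.Icc 0 1))
    (M : ℝ) (hM : IsLUB (V '' Set.Icc 0 1) M)
    (p : ℝ → ℝ → ℝ)
    (hp : ∀ ε r : ℝ, p ε r =
      -(1/ε) * (r ^ (n-1))⁻¹ * Real.exp (-r/ε) *
        ∫ s in (0:ℝ)..r, s ^ (n-1) * Real.exp (s/ε) * V s) :
    (∀ ε : ℝ, 0 < ε → ∀ r ∈ Set.Ioc (0:ℝ) 1, |p ε r| ≤ M) ∧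
      (∀ ε : ℝ, 0 < ε → ∀ x ∈ Set.Icc (0:ℝ) 1, ∀ y ∈ Set.Icc (0:ℝ) 1,
        |(∫ s in x..(1:ℝ), -p ε s) - ∫ s in y..(1:ℝ), -p ε s| ≤ M * |x - y|) := by
  obtain ⟨K, hK⟩ := hVlip
  have hp_eq : ∀ ε, p ε = radialFlux (n - 1) V ε := fun ε => funext (hp ε)
  have hVM : ∀ s ∈ Ioc (0:ℝ) 1, |V s| ≤ M := fun s hs =>
    (abs_of_nonneg (hV0 s (Ioc_subset_Icc_self hs))).trans_le
      (hM.1 ⟨s, Ioc_subset_Icc_self hs, rfl⟩)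
  have hbound : ∀ ε : ℝ, 0 < ε → ∀ r ∈ Ioc (0:ℝ) 1, |p ε r| ≤ M := fun ε hε r hr => by
    rw [hp_eq]
    exact abs_radialFlux_le hε hr.1 fun s hs => hVM s ⟨hs.1, hs.2.trans hr.2⟩
  refine ⟨hbound, fun ε hε x hx y hy => ?_⟩
  have hcont : ContinuousOn (p ε) (Ioc 0 1) :=
    hp_eq ε ▸ continuousOn_radialFlux (hK.continuousOn.intervalIntegrable_of_Icc zero_le_one) ε
  have hneg_bound : ∀ s ∈ Ioc (0:ℝ) 1, |-p ε s| ≤ M := fun s hs =>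
    (abs_neg _).trans_le (hbound ε hε s hs)
  exact abs_integral_sub_integral_le_mul_abs_sub
    (IntervalIntegrable.of_continuousOn_Ioc_of_abs_le zero_le_one hcont.neg hneg_bound)
    hneg_bound hx hy (right_mem_Icc.2 zero_le_one)

/-- For every `ε > 0` and every `r ∈ (0,1]`, `|p^ε(r)| ≤ M`, where
`M = sup_{s ∈ [0,1]} V(s)`; in particular the family `{u^ε}` is uniformly Lipschitz
on `[0,1]` with Lipschitz constant `M`. -/
theorem eikonal_p_eps_bounded_u_eps_lipschitz
    (n : ℕ) (hn : 1 ≤ n) (V : ℝ → ℝ)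
    (hV0 : ∀ s ∈ Set.Icc (0:ℝ) 1, 0 ≤ V s)
    (hVb : ∃ M' : ℝ, ∀ s ∈ Set.Icc (0:ℝ) 1, |V s| ≤ M')
    (hVlip : ∃ K : NNReal, LipschitzOnWith K V (Set.Icc 0 1))
    (M : ℝ) (hM : IsLUB (V '' Set.Icc 0 1) M)
    (p : ℝ → ℝ → ℝ)
    (hp : ∀ ε r : ℝ, p ε r =
      -(1/ε) * (r ^ (n-1))⁻¹ * Real.exp (-r/ε) *
        ∫ s in (0:ℝ)..r, s ^ (n-1) * Real.exp (s/ε) * V s) :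
    (∀ ε : ℝ, 0 < ε → ∀ r ∈ Set.Ioc (0:ℝ) 1, |p ε r| ≤ M) ∧
      (∀ ε : ℝ, 0 < ε → ∀ x ∈ Set.Icc (0:ℝ) 1, ∀ y ∈ Set.Icc (0:ℝ) 1,
        |(∫ s in x..(1:ℝ), -p ε s) - ∫ s in y..(1:ℝ), -p ε s| ≤ M * |x - y|) :=
  eikonal_p_eps_bounded_u_eps_lipschitz_general n V hV0 hVlip M hM p hp
end

section
/- For fixed ε > 0, the radially symmetric extension U^ε : B(0,1) → ℝ defined by U^ε(x) = u^ε(|x|) (with u^ε(0) = ∫_0^1 (−p^ε(s)) ds) is Fréchet differentiable at the origin with derivative DU^ε(0) = 0. -/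
open Filter Set Real
open MeasureTheory Topology

/-!
Write `p r = -(1/ε) e^{-r/ε} w r` with `w r = r^{-m} ∫₀^r s^m ψ s`, `m = n - 1`, and
`ψ s = e^{s/ε} V s` continuous on `[0,1]`. Then `|w r| ≤ (sup |ψ|) r / (m + 1)`, so `p` is
continuous on `[0,1]` with `p 0 = 0`. By the fundamental theorem of calculus
`u t = ∫_t^1 (-p)` has right derivative `p 0 = 0` at `0`, i.e. `u t - u 0 = o(t)`, and
substituting `t = ‖x‖` gives `U x - U 0 = o(‖x‖)`.
-/

theorem abs_inv_pow_mul_integral_pow_mul_le (m : ℕ) {ψ : ℝ → ℝ} {B r : ℝ} (hr : 0 ≤ r)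
    (hψ : ∀ s ∈ Ioc 0 r, |ψ s| ≤ B) :
    |(r ^ m)⁻¹ * ∫ s in (0:ℝ)..r, s ^ m * ψ s| ≤ B * r / (m + 1) := by
  have hint : |∫ s in (0:ℝ)..r, s ^ m * ψ s| ≤ B * (r ^ (m + 1) / (m + 1)) := by
    calc ‖∫ s in (0:ℝ)..r, s ^ m * ψ s‖ ≤ ∫ s in (0:ℝ)..r, B * s ^ m := by
          refine intervalIntegral.norm_integral_le_of_norm_le hr (ae_of_all volume fun s hs => ?_)
            ((continuous_const.mul (continuous_pow m)).intervalIntegrable 0 r)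
          rw [Real.norm_eq_abs, abs_mul, abs_of_nonneg (pow_nonneg hs.1.le m), mul_comm]
          exact mul_le_mul_of_nonneg_right (hψ s hs) (pow_nonneg hs.1.le m)
      _ = B * (r ^ (m + 1) / (m + 1)) := by simp [integral_pow]
  have hr_pow : (r ^ m)⁻¹ * r ^ (m + 1) = r := by
    rcases hr.eq_or_lt with rfl | hr
    · simp
    · rw [pow_succ, inv_mul_cancel_left₀ (pow_pos hr m).ne']
  calc |(r ^ m)⁻¹ * ∫ s in (0:ℝ)..r, s ^ m * ψ s|
      ≤ (r ^ m)⁻¹ * (B * (r ^ (m + 1) / (m + 1))) := by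
        rw [abs_mul, abs_of_nonneg (by positivity)]
        exact mul_le_mul_of_nonneg_left hint (by positivity)
    _ = B * ((r ^ m)⁻¹ * r ^ (m + 1)) / (m + 1) := by ring
    _ = B * r / (m + 1) := by rw [hr_pow]

theorem continuousOn_inv_pow_mul_integral_pow_mul (m : ℕ) {ψ : ℝ → ℝ} {b : ℝ}
    (hψ : ContinuousOn ψ (Icc 0 b)) :
    ContinuousOn (fun r => (r ^ m)⁻¹ * ∫ s in (0:ℝ)..r, s ^ m * ψ s) (Icc 0 b) := by
  rcases lt_or_ge b 0 with hb | hb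
  · simp [Icc_eq_empty_of_lt hb]
  obtain ⟨B, hB⟩ := isCompact_Icc.exists_bound_of_continuousOn hψ
  have hprim : ContinuousOn (fun r => ∫ s in (0:ℝ)..r, s ^ m * ψ s) (Icc 0 b) := by
    simpa [uIcc_of_le hb] using intervalIntegral.continuousOn_primitive_interval'
      (((continuousOn_pow m).mul hψ).intervalIntegrable_of_Icc hb) left_mem_uIcc
  intro r hr
  rcases hr.1.eq_or_lt with rfl | hr0
  · have hlin : Tendsto (fun r => B * r / (m + 1)) (𝓝[Icc 0 b] 0) (𝓝 0) := by
      simpa using ((tendsto_id.const_mul B).div_const ((m : ℝ) + 1)).mono_left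
        (nhdsWithin_le_nhds (a := (0:ℝ)))
    simp only [ContinuousWithinAt, intervalIntegral.integral_same, mul_zero]
    refine squeeze_zero_norm' ?_ hlin
    filter_upwards [self_mem_nhdsWithin] with r hr
    exact abs_inv_pow_mul_integral_pow_mul_le m hr.1 fun s hs => hB s ⟨hs.1.le, hs.2.trans hr.2⟩
  · exact ((continuousAt_id.pow m).inv₀ (pow_pos hr0 m).ne').continuousWithinAt.mul (hprim r hr)

theorem HasDerivWithinAt.hasFDerivAt_comp_norm {E F : Type*} [NormedAddCommGroup E]
    [NormedSpace ℝ E] [NormedAddCommGroup F] [NormedSpace ℝ F] {g : ℝ → F}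
    (hg : HasDerivWithinAt g 0 (Ici 0) 0) :
    HasFDerivAt (fun x : E => g ‖x‖) (0 : E →L[ℝ] F) 0 := by
  have hnorm : Tendsto (fun x : E => ‖x‖) (𝓝 0) (𝓝[≥] 0) :=
    tendsto_nhdsWithin_iff.2 ⟨by simpa using tendsto_norm_zero (E := E),
      Eventually.of_forall fun x => norm_nonneg x⟩
  rw [hasDerivWithinAt_iff_isLittleO] at hg
  rw [hasFDerivAt_iff_isLittleO_nhds_zero]
  exact .of_norm_right (by simpa [Function.comp_def] using hg.comp_tendsto hnorm)

theorem hasFDerivAt_integral_norm_zero {E : Type*} [NormedAddCommGroup E] [NormedSpace ℝ E]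
    {f : ℝ → ℝ} {b : ℝ} (hb : 0 < b) (hf : ContinuousOn f (Icc 0 b)) (hf0 : f 0 = 0) :
    HasFDerivAt (fun x : E => ∫ s in ‖x‖..b, f s) (0 : E →L[ℝ] ℝ) 0 := by
  have : Fact ((0:ℝ) ∈ Icc 0 b) := ⟨left_mem_Icc.2 hb.le⟩
  have hftc := intervalIntegral.integral_hasDerivWithinAt_left (s := Icc 0 b)
    (hf.intervalIntegrable_of_Icc hb.le)
    (hf.stronglyMeasurableAtFilter_nhdsWithin measurableSet_Icc 0) (hf 0 this.out)
  rw [hf0, neg_zero] at hftc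
  exact (hftc.mono_of_mem_nhdsWithin (Icc_mem_nhdsGE hb)).hasFDerivAt_comp_norm

theorem eikonal_radial_extension_differentiable_at_origin_general
    (n : ℕ) (ε : ℝ) (V : ℝ → ℝ)
    (hVlip : ∃ K : NNReal, LipschitzOnWith K V (Set.Icc 0 1))
    (p : ℝ → ℝ)
    (hp : ∀ r : ℝ, p r =
      -(1/ε) * (r ^ (n-1))⁻¹ * Real.exp (-r/ε) *
        ∫ s in (0:ℝ)..r, s ^ (n-1) * Real.exp (s/ε) * V s) :
    HasFDerivAt (fun x : EuclideanSpace ℝ (Fin n) => ∫ s in ‖x‖..(1:ℝ), -p s)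
      (0 : EuclideanSpace ℝ (Fin n) →L[ℝ] ℝ) 0 := by
  obtain ⟨K, hK⟩ := hVlip
  have hp_eq : p = fun r => -(1/ε) * Real.exp (-r/ε) *
      ((r ^ (n-1))⁻¹ * ∫ s in (0:ℝ)..r, s ^ (n-1) * (Real.exp (s/ε) * V s)) := by
    funext r
    simp only [hp, mul_assoc]
    ring
  have hp_cont : ContinuousOn p (Icc 0 1) := by
    rw [hp_eq]
    have hψ : ContinuousOn (fun s => Real.exp (s/ε) * V s) (Icc 0 1) :=
      (Continuous.continuousOn (by fun_prop)).mul hK.continuousOn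
    exact (Continuous.continuousOn (by fun_prop)).mul
      (continuousOn_inv_pow_mul_integral_pow_mul _ hψ)
  exact hasFDerivAt_integral_norm_zero one_pos hp_cont.neg (by simp [hp])

/-- For fixed `ε > 0`, the radially symmetric extension
`U^ε(x) = u^ε(|x|)` (with `u^ε(r) = ∫_r^1 (-p^ε(s)) ds`, so in particular
`u^ε(0) = ∫_0^1 (-p^ε(s)) ds`) is Fréchet differentiable at the origin of `ℝⁿ`
with derivative `DU^ε(0) = 0`. -/
theorem eikonal_radial_extension_differentiable_at_origin
    (n : ℕ) (hn : 1 ≤ n) (ε : ℝ) (hε : 0 < ε) (V : ℝ → ℝ)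
    (hV0 : ∀ s ∈ Set.Icc (0:ℝ) 1, 0 ≤ V s)
    (hVb : ∃ M : ℝ, ∀ s ∈ Set.Icc (0:ℝ) 1, |V s| ≤ M)
    (hVlip : ∃ K : NNReal, LipschitzOnWith K V (Set.Icc 0 1))
    (p : ℝ → ℝ)
    (hp : ∀ r : ℝ, p r =
      -(1/ε) * (r ^ (n-1))⁻¹ * Real.exp (-r/ε) *
        ∫ s in (0:ℝ)..r, s ^ (n-1) * Real.exp (s/ε) * V s) :
    HasFDerivAt (fun x : EuclideanSpace ℝ (Fin n) => ∫ s in ‖x‖..(1:ℝ), -p s)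
      (0 : EuclideanSpace ℝ (Fin n) →L[ℝ] ℝ) 0 :=
  eikonal_radial_extension_differentiable_at_origin_general n ε V hVlip p hp
end

section
/- Comparison principle: Let U ⊆ ℝⁿ be open and bounded, let f : closure(U) → ℝ be continuous and nonnegative, and set A = {x ∈ U : f(x) = 0}. If u and v are viscosity solutions of |Du| = f in U with zero Dirichlet boundary data, and u(x) ≤ v(x) for every x ∈ A, then u(x) ≤ v(x) for every x ∈ U. -/
/-!
Doubling of variables. If `u > v` at `x₀`, then for `t < 1` close to `1` the function
`g = t u - v` stays below `g x₀` by a fixed margin on `∂U` (where `g ≤ 0`) and on `{f = 0}`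
(where `u ≤ v` gives `g ≤ (1 - t) sup |u|`). So the set where `g` comes within that margin of
`g x₀` is a compact subset of `U` on which `f ≥ m > 0`. For `κ` large, a maximizer `(a, b)` of
`t u(x) - v(y) - κ |x - y|²` on `closure U × closure U` is a pair of nearby points of that set,
and testing the sub- and supersolution properties with the quadratic penalty gives
`f b ≤ 2 κ |a - b| ≤ t f a`. Hence `f a - f b ≥ (1 - t) m`, which contradicts the uniform
continuity of `f`.
-/

open Filter Set Real

def IsViscositySubsolutionEikonal (n : ℕ) (U : Set (EuclideanSpace ℝ (Fin n)))
    (f u : EuclideanSpace ℝ (Fin n) → ℝ) : Prop :=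
  (∀ x ∈ frontier U, u x ≤ 0) ∧
    ∀ φ : EuclideanSpace ℝ (Fin n) → ℝ, ContDiff ℝ 1 φ →
      ∀ x₀ ∈ U, IsLocalMax (fun x => u x - φ x) x₀ → ‖fderiv ℝ φ x₀‖ ≤ f x₀

def IsViscositySupersolutionEikonal (n : ℕ) (U : Set (EuclideanSpace ℝ (Fin n)))
    (f u : EuclideanSpace ℝ (Fin n) → ℝ) : Prop :=
  (∀ x ∈ frontier U, 0 ≤ u x) ∧
    ∀ φ : EuclideanSpace ℝ (Fin n) → ℝ, ContDiff ℝ 1 φ →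
      ∀ x₀ ∈ U, IsLocalMin (fun x => u x - φ x) x₀ → f x₀ ≤ ‖fderiv ℝ φ x₀‖

def IsViscositySolutionEikonal (n : ℕ) (U : Set (EuclideanSpace ℝ (Fin n)))
    (f u : EuclideanSpace ℝ (Fin n) → ℝ) : Prop :=
  UniformContinuousOn u (closure U) ∧ Bornology.IsBounded (u '' closure U) ∧
    IsViscositySubsolutionEikonal n U f u ∧ IsViscositySupersolutionEikonal n U f u

open scoped Topology Uniformity

section QuadraticTestFunction

variable {E : Type*} [NormedAddCommGroup E] [InnerProductSpace ℝ E]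

theorem contDiff_mul_norm_sub_sq {k : WithTop ℕ∞} (c : ℝ) (y : E) :
    ContDiff ℝ k (fun x => c * ‖x - y‖ ^ 2) :=
  contDiff_const.mul ((contDiff_id.sub contDiff_const).norm_sq ℝ)

theorem norm_fderiv_mul_norm_sub_sq (c : ℝ) (x y : E) :
    ‖fderiv ℝ (fun z => c * ‖z - y‖ ^ 2) x‖ = 2 * |c| * ‖x - y‖ := by
  have hderiv : HasFDerivAt (fun z => c * ‖z - y‖ ^ 2) _ x :=
    ((hasFDerivAt_id x).sub_const y).norm_sq.const_mul c
  rw [hderiv.fderiv, ContinuousLinearMap.comp_id, norm_smul, RCLike.norm_nsmul ℝ,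
    innerSL_apply_norm, Real.norm_eq_abs, id, nsmul_eq_mul, Nat.cast_ofNat]
  ring

end QuadraticTestFunction

section Touching

variable {n : ℕ} {U : Set (EuclideanSpace ℝ (Fin n))} {f u v : EuclideanSpace ℝ (Fin n) → ℝ}
  {a b : EuclideanSpace ℝ (Fin n)} {κ : ℝ}

theorem IsViscositySubsolutionEikonal.mul_norm_sub_le_of_isLocalMax
    (hu : IsViscositySubsolutionEikonal n U f u) (ha : a ∈ U) (hκ : 0 ≤ κ)
    (hmax : IsLocalMax (fun x => u x - κ * ‖x - b‖ ^ 2) a) :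
    2 * κ * ‖a - b‖ ≤ f a := by
  have := hu.2 _ (contDiff_mul_norm_sub_sq κ b) a ha hmax
  rwa [norm_fderiv_mul_norm_sub_sq, abs_of_nonneg hκ] at this

theorem IsViscositySupersolutionEikonal.le_mul_norm_sub_of_isLocalMin
    (hv : IsViscositySupersolutionEikonal n U f v) (hb : b ∈ U) (hκ : 0 ≤ κ)
    (hmin : IsLocalMin (fun y => v y + κ * ‖y - a‖ ^ 2) b) :
    f b ≤ 2 * κ * ‖b - a‖ := by
  have := hv.2 _ (contDiff_mul_norm_sub_sq (-κ) a) b hb (by simpa only [neg_mul, sub_neg_eq_add])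
  rwa [norm_fderiv_mul_norm_sub_sq, abs_neg, abs_of_nonneg hκ] at this

end Touching

section Doubling

variable {X : Type*} [PseudoMetricSpace X]

def doublingFunctional (u v : X → ℝ) (κ : ℝ) (p : X × X) : ℝ :=
  u p.1 - v p.2 - κ * dist p.1 p.2 ^ 2

theorem continuousOn_doublingFunctional {u v : X → ℝ} {K : Set X} (hu : ContinuousOn u K)
    (hv : ContinuousOn v K) (κ : ℝ) : ContinuousOn (doublingFunctional u v κ) (K ×ˢ K) :=
  ((hu.comp continuousOn_fst fun _ hp => hp.1).sub
    (hv.comp continuousOn_snd fun _ hp => hp.2)).sub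
    (continuous_const.mul (continuous_dist.pow 2)).continuousOn

theorem IsCompact.exists_isMaxOn_doublingFunctional {K : Set X} (hK : IsCompact K)
    (hne : K.Nonempty) {u v : X → ℝ} (hu : ContinuousOn u K) (hv : ContinuousOn v K)
    {P : X × X → Prop} (hP : ∀ᶠ p in 𝓤 X ⊓ 𝓟 (K ×ˢ K), P p) :
    ∃ κ > 0, ∃ a ∈ K, ∃ b ∈ K, P (a, b) ∧ IsMaxOn (doublingFunctional u v κ) (K ×ˢ K) (a, b) := by
  obtain ⟨ρ, hρ, hρP⟩ := Metric.mem_uniformity_dist.1 (mem_inf_principal.1 hP)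
  obtain ⟨C, hC⟩ := hK.exists_bound_of_continuousOn hv
  obtain ⟨κ, hκ, hκC⟩ : ∃ κ > 0, 2 * C < κ * ρ ^ 2 :=
    ⟨(2 * |C| + 1) / ρ ^ 2, by positivity, by field_simp; linarith [le_abs_self C]⟩
  obtain ⟨⟨a, b⟩, ⟨ha, hb⟩, hmax⟩ :=
    (hK.prod hK).exists_isMaxOn (hne.prod hne) (continuousOn_doublingFunctional hu hv κ)
  refine ⟨κ, hκ, a, ha, b, hb, hρP ?_ (mk_mem_prod ha hb), hmax⟩
  have hdiag : κ * dist a b ^ 2 ≤ v a - v b := by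
    have := isMaxOn_iff.1 hmax _ (mk_mem_prod ha ha)
    simp only [doublingFunctional, dist_self] at this
    linarith
  have hva := abs_le.1 (hC a ha)
  have hvb := abs_le.1 (hC b hb)
  have hsq : dist a b ^ 2 < ρ ^ 2 := lt_of_mul_lt_mul_left (by linarith) hκ.le
  exact lt_of_pow_lt_pow_left₀ 2 hρ.le hsq

end Doubling

section Comparison

variable {n : ℕ} {U : Set (EuclideanSpace ℝ (Fin n))} {f u v : EuclideanSpace ℝ (Fin n) → ℝ}

theorem le_mul_of_isMaxOn_doublingFunctional (hU : IsOpen U)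
    (hu : IsViscositySubsolutionEikonal n U f u) (hv : IsViscositySupersolutionEikonal n U f v)
    {t κ : ℝ} (ht : 0 < t) (hκ : 0 ≤ κ) {a b : EuclideanSpace ℝ (Fin n)} (ha : a ∈ U)
    (hb : b ∈ U) (hmax : IsMaxOn (doublingFunctional (fun x => t * u x) v κ) (U ×ˢ U) (a, b)) :
    f b ≤ t * f a := by
  have hsub : IsLocalMax (fun x => u x - κ / t * ‖x - b‖ ^ 2) a := by
    filter_upwards [hU.mem_nhds ha] with x hx
    have := isMaxOn_iff.1 hmax _ (mk_mem_prod hx hb)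
    simp only [doublingFunctional, dist_eq_norm] at this
    have key : ∀ z, t * (u z - κ / t * ‖z - b‖ ^ 2) = t * u z - κ * ‖z - b‖ ^ 2 := fun z => by
      field_simp
    exact le_of_mul_le_mul_left (by linarith [key x, key a]) ht
  have hsuper : IsLocalMin (fun y => v y + κ * ‖y - a‖ ^ 2) b := by
    filter_upwards [hU.mem_nhds hb] with y hy
    have := isMaxOn_iff.1 hmax _ (mk_mem_prod ha hy)
    simp only [doublingFunctional, dist_eq_norm, norm_sub_rev a] at this
    linarith
  calc f b ≤ 2 * κ * ‖b - a‖ := hv.le_mul_norm_sub_of_isLocalMin hb hκ hsuper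
    _ = t * (2 * (κ / t) * ‖a - b‖) := by rw [norm_sub_rev]; field_simp
    _ ≤ t * f a := by
      gcongr
      exact hu.mul_norm_sub_le_of_isLocalMax ha (by positivity) hsub

theorem exists_mem_frontier_or_nonpos_sub_le (hU : IsOpen U)
    (hK : IsCompact (closure U)) (hu : IsViscositySubsolutionEikonal n U f u)
    (hv : IsViscositySupersolutionEikonal n U f v) (huc : ContinuousOn u (closure U))
    (hvc : ContinuousOn v (closure U)) (hfc : ContinuousOn f (closure U)) {t : ℝ} (ht₀ : 0 < t)
    (ht₁ : t < 1) {z : EuclideanSpace ℝ (Fin n)} (hz : z ∈ closure U) {η : ℝ} (hη : 0 < η) :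
    ∃ x, (x ∈ frontier U ∨ x ∈ U ∧ f x ≤ 0) ∧ t * u z - v z - η ≤ t * u x - v x := by
  by_contra! hfar
  have htuc : ContinuousOn (fun x => t * u x) (closure U) := continuousOn_const.mul huc
  have hgc : ContinuousOn (fun x => t * u x - v x) (closure U) := htuc.sub hvc
  set K' := closure U ∩ (fun x => t * u x - v x) ⁻¹' Ici (t * u z - v z - η)
  have hK'U : K' ⊆ U := fun x ⟨hx, hxη⟩ => by
    by_contra hxU
    exact (hfar x (.inl ⟨hx, by rwa [hU.interior_eq]⟩)).not_ge hxη
  have hK'f : ∀ x ∈ K', 0 < f x := fun x hx => by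
    by_contra! hfx
    exact (hfar x (.inr ⟨hK'U hx, hfx⟩)).not_ge hx.2
  have hK'c : IsCompact K' :=
    hK.of_isClosed_subset (hgc.preimage_isClosed_of_isClosed isClosed_closure isClosed_Ici)
      inter_subset_left
  obtain ⟨m, hm, hmf⟩ := hK'c.exists_forall_le' (hfc.mono inter_subset_left) hK'f
  have hclose : ∀ᶠ p in 𝓤 _ ⊓ 𝓟 (closure U ×ˢ closure U),
      dist (u p.1) (u p.2) < η ∧ dist (v p.1) (v p.2) < η ∧ dist (f p.1) (f p.2) < (1 - t) * m :=
    ((hK.uniformContinuousOn_of_continuous huc).eventually (Metric.dist_mem_uniformity hη)).and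
      (((hK.uniformContinuousOn_of_continuous hvc).eventually (Metric.dist_mem_uniformity hη)).and
      ((hK.uniformContinuousOn_of_continuous hfc).eventually
        (Metric.dist_mem_uniformity (by nlinarith))))
  obtain ⟨κ, hκ, a, ha, b, hb, ⟨hua, hva, hfa⟩, hab⟩ :=
    hK.exists_isMaxOn_doublingFunctional ⟨z, hz⟩ htuc hvc hclose
  simp only [Real.dist_eq, abs_lt] at hua hva hfa
  have hzab : t * u z - v z ≤ t * u a - v b := by
    have := isMaxOn_iff.1 hab _ (mk_mem_prod hz hz)
    simp only [doublingFunctional, dist_self] at this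
    linarith [mul_nonneg hκ.le (sq_nonneg (dist a b))]
  have haK' : a ∈ K' := ⟨ha, by simp only [mem_preimage, mem_Ici]; linarith⟩
  have hbK' : b ∈ K' :=
    ⟨hb, by simp only [mem_preimage, mem_Ici]; nlinarith [mul_lt_mul_of_pos_left hua.2 ht₀]⟩
  have hfba : f b ≤ t * f a := le_mul_of_isMaxOn_doublingFunctional hU hu hv ht₀ hκ.le
    (hK'U haK') (hK'U hbK') (hab.on_subset (prod_mono subset_closure subset_closure))
  linarith [mul_le_mul_of_nonneg_left (hmf a haK') (sub_nonneg.2 ht₁.le)]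

theorem mul_sub_le_of_mem_frontier_or_nonpos (hu : IsViscositySubsolutionEikonal n U f u)
    (hv : IsViscositySupersolutionEikonal n U f v) (hf₀ : ∀ x ∈ U, 0 ≤ f x)
    (hA : ∀ x ∈ U, f x = 0 → u x ≤ v x) {t : ℝ} (ht₀ : 0 ≤ t) (ht₁ : t ≤ 1) {C : ℝ}
    (hC : ∀ x ∈ closure U, |u x| ≤ C) {x : EuclideanSpace ℝ (Fin n)}
    (hx : x ∈ frontier U ∨ x ∈ U ∧ f x ≤ 0) : t * u x - v x ≤ (1 - t) * C := by
  rcases hx with hx | ⟨hx, hfx⟩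
  · have hCx := (abs_nonneg _).trans (hC x (frontier_subset_closure hx))
    nlinarith [hu.1 x hx, hv.1 x hx]
  · have huv := hA x hx (le_antisymm hfx (hf₀ x hx))
    nlinarith [neg_le_of_abs_le (hC x (subset_closure hx))]

end Comparison

/-- Comparison principle: let `U ⊆ ℝⁿ` be open and bounded, `f`
continuous and nonnegative on `closure U`, and `A = {x ∈ U : f x = 0}`. If `u` and `v`
are viscosity solutions of `|Du| = f` in `U` with zero Dirichlet boundary data, and
`u ≤ v` on `A`, then `u ≤ v` in `U`. -/
theorem eikonal_comparison_principle
    (n : ℕ) (U : Set (EuclideanSpace ℝ (Fin n)))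
    (hUopen : IsOpen U) (hUbdd : Bornology.IsBounded U)
    (f : EuclideanSpace ℝ (Fin n) → ℝ)
    (hf : ContinuousOn f (closure U)) (hf0 : ∀ x ∈ closure U, 0 ≤ f x)
    (u v : EuclideanSpace ℝ (Fin n) → ℝ)
    (hu : IsViscositySolutionEikonal n U f u)
    (hv : IsViscositySolutionEikonal n U f v)
    (hA : ∀ x ∈ U, f x = 0 → u x ≤ v x) :
    ∀ x ∈ U, u x ≤ v x := by
  intro x₀ hx₀
  by_contra! hlt
  have hK : IsCompact (closure U) := hUbdd.isCompact_closure
  have huc : ContinuousOn u (closure U) := hu.1.continuousOn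
  obtain ⟨C, hC⟩ := hK.exists_bound_of_continuousOn huc
  set δ := u x₀ - v x₀ with hδ
  have hnear : ∀ᶠ t in 𝓝[<] (1 : ℝ), 0 < t ∧ 4 * ((1 - t) * C) < δ := by
    have hlim : Tendsto (fun t : ℝ => 4 * ((1 - t) * C)) (𝓝 1) (𝓝 0) :=
      (by fun_prop : Continuous fun t : ℝ => 4 * ((1 - t) * C)).tendsto' 1 0 (by simp)
    exact nhdsWithin_le_nhds
      ((lt_mem_nhds one_pos).and (hlim.eventually (gt_mem_nhds (by linarith))))
  obtain ⟨t, ⟨ht₀, htC⟩, ht₁⟩ := (hnear.and self_mem_nhdsWithin).exists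
  obtain ⟨x, hx, hx₀x⟩ := exists_mem_frontier_or_nonpos_sub_le hUopen hK hu.2.2.1 hv.2.2.2 huc
    hv.1.continuousOn hf ht₀ ht₁ (subset_closure hx₀) (η := δ / 2) (by linarith)
  have hxC := mul_sub_le_of_mem_frontier_or_nonpos hu.2.2.1 hv.2.2.2
    (fun x hx => hf0 x (subset_closure hx)) hA ht₀.le ht₁.le hC hx
  have hx₀C := mul_le_mul_of_nonneg_left (le_of_abs_le (hC x₀ (subset_closure hx₀)))
    (sub_nonneg.2 ht₁.le)
  linarith
end

section
/- Let U ⊆ ℝⁿ be open and bounded and let f : closure(U) → ℝ be continuous with f(x) > 0 for every x ∈ U. Then any two viscosity solutions of |Du| = f in U with zero Dirichlet boundary data coincide on U; i.e., the viscosity solution, if it exists, is unique. -/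
open Filter Set Real

/-!
Comparison by doubling of variables. If `w` is a subsolution for a right-hand side `g` and `v`
a supersolution for `f` with `g < f`, then maximising `w x - v y - k‖x - y‖²` over
`closure U × closure U` yields points `(xₖ, yₖ)` which accumulate on the diagonal at a maximum
point `z` of `w - v`. If `w - v` were positive somewhere, the boundary data would force `z ∈ U`;
then `(xₖ, yₖ)` eventually lie in `U`, and the quadratic penalty is an admissible test function
in each variable, with the same gradient norm `2k‖xₖ - yₖ‖` on both sides. This gives
`f yₖ ≤ g xₖ`, and in the limit `f z ≤ g z`, a contradiction. For two solutions `u`, `v` of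
`|Du| = f` with `f > 0` in `U`, `s u` is a subsolution for `s f < f` whenever `0 < s < 1`,
so `s u ≤ v`, and `u ≤ v` follows as `s → 1`.
-/

open Topology

section TestFunctions

variable {E : Type*} [NormedAddCommGroup E] [InnerProductSpace ℝ E]

theorem contDiff_const_mul_dist_sq {m : WithTop ℕ∞} (c : ℝ) (y : E) :
    ContDiff ℝ m fun z => c * dist z y ^ 2 := by
  simp_rw [dist_eq_norm]
  exact contDiff_const.mul ((contDiff_id.sub contDiff_const).norm_sq ℝ)

theorem norm_fderiv_const_mul_dist_sq (c : ℝ) (x y : E) :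
    ‖fderiv ℝ (fun z => c * dist z y ^ 2) x‖ = 2 * |c| * dist x y := by
  have h : HasFDerivAt (fun z => c * dist z y ^ 2) (c • (2 • innerSL ℝ (x - y))) x := by
    simp_rw [dist_eq_norm]
    simpa using ((hasFDerivAt_id x).sub_const y).norm_sq.const_mul c
  rw [h.fderiv, norm_smul, ← Nat.cast_smul_eq_nsmul ℝ, norm_smul, innerSL_apply_norm,
    dist_eq_norm, Real.norm_eq_abs, Nat.cast_ofNat, Real.norm_two]
  ring

end TestFunctions

theorem IsCompact.exists_subseq_tendsto_diag_of_isMaxOn_penalized {X : Type*} [MetricSpace X]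
    {K : Set X} (hK : IsCompact K) {a b : X → ℝ} (ha : ContinuousOn a K) (hb : ContinuousOn b K)
    {p : ℕ → X × X} (hpK : ∀ k, p k ∈ K ×ˢ K)
    (hp : ∀ k : ℕ, IsMaxOn (fun q => a q.1 - b q.2 - k * dist q.1 q.2 ^ 2) (K ×ˢ K) (p k)) :
    ∃ z ∈ K, ∃ φ : ℕ → ℕ, StrictMono φ ∧ Tendsto (p ∘ φ) atTop (𝓝 (z, z)) ∧
      IsMaxOn (fun x => a x - b x) K z := by
  have hgap : ∀ k : ℕ, ∀ x ∈ K,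
      a x - b x + k * dist (p k).1 (p k).2 ^ 2 ≤ a (p k).1 - b (p k).2 := fun k x hx => by
    have := hp k (mk_mem_prod hx hx)
    simp only [dist_self, Set.mem_ofPred_eq] at this
    linarith
  obtain ⟨C, hC⟩ := hK.exists_bound_of_continuousOn hb
  have hpen : ∀ k : ℕ, k * dist (p k).1 (p k).2 ^ 2 ≤ 2 * C := fun k => by
    have h₁ := abs_le.1 (Real.norm_eq_abs _ ▸ hC _ (hpK k).1)
    have h₂ := abs_le.1 (Real.norm_eq_abs _ ▸ hC _ (hpK k).2)
    linarith [hgap k _ (hpK k).1]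
  obtain ⟨⟨x, y⟩, ⟨hx, -⟩, φ, hφ, hlim⟩ := (hK.prod hK).tendsto_subseq hpK
  have hxy : x = y := by
    have hsq : Tendsto (fun k => dist (p (φ k)).1 (p (φ k)).2 ^ 2) atTop (𝓝 (dist x y ^ 2)) :=
      (hlim.fst_nhds.dist hlim.snd_nhds).pow 2
    have hbound : ∀ᶠ k in atTop, dist (p (φ k)).1 (p (φ k)).2 ^ 2 ≤ 2 * C / φ k := by
      filter_upwards [eventually_ge_atTop 1] with k hk
      have hφk : (0 : ℝ) < φ k := Nat.cast_pos.2 (hk.trans (hφ.id_le k))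
      rw [le_div_iff₀ hφk, mul_comm]
      exact hpen (φ k)
    have h0 := le_of_tendsto_of_tendsto hsq
      ((tendsto_const_div_atTop_nhds_zero_nat (2 * C)).comp hφ.tendsto_atTop) hbound
    exact dist_le_zero.1 (by nlinarith [dist_nonneg (x := x) (y := y)])
  subst hxy
  refine ⟨x, hx, φ, hφ, hlim, fun z hz => ?_⟩
  have hab : ContinuousOn (fun q : X × X => a q.1 - b q.2) (K ×ˢ K) :=
    (ha.comp continuousOn_fst fun _ hq => hq.1).sub (hb.comp continuousOn_snd fun _ hq => hq.2)
  refine ge_of_tendsto' ((hab _ (mk_mem_prod hx hx)).tendsto.comp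
    (tendsto_nhdsWithin_iff.2 ⟨hlim, .of_forall fun k => hpK (φ k)⟩)) fun k => ?_
  have := hgap (φ k) z hz
  have : 0 ≤ (φ k : ℝ) * dist (p (φ k)).1 (p (φ k)).2 ^ 2 := by positivity
  simp only [Function.comp_apply]
  linarith

section Eikonal

variable {n : ℕ} {U : Set (EuclideanSpace ℝ (Fin n))} {f g w v : EuclideanSpace ℝ (Fin n) → ℝ}

theorem IsViscositySubsolutionEikonal.const_mul {s : ℝ} (hs : 0 < s)
    (hw : IsViscositySubsolutionEikonal n U g w) :
    IsViscositySubsolutionEikonal n U (fun x => s * g x) (fun x => s * w x) := by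
  refine ⟨fun x hx => mul_nonpos_of_nonneg_of_nonpos hs.le (hw.1 x hx), fun φ hφ x₀ hx₀ hmax => ?_⟩
  have hmax' : IsLocalMax (fun x => w x - s⁻¹ * φ x) x₀ := by
    filter_upwards [hmax] with x hx
    have := mul_le_mul_of_nonneg_left hx (inv_nonneg.2 hs.le)
    rwa [mul_sub, mul_sub, ← mul_assoc, ← mul_assoc, inv_mul_cancel₀ hs.ne', one_mul,
      one_mul] at this
  have h := hw.2 _ (contDiff_const.mul hφ) x₀ hx₀ hmax'
  rw [fderiv_const_mul (hφ.differentiable one_ne_zero x₀), norm_smul, norm_inv,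
    Real.norm_of_nonneg hs.le, inv_mul_le_iff₀ hs] at h
  exact h

theorem IsViscositySubsolutionEikonal.le_of_isMaxOn_penalized (hU : IsOpen U)
    (hw : IsViscositySubsolutionEikonal n U g w) (hv : IsViscositySupersolutionEikonal n U f v)
    {l : ℝ} {x y : EuclideanSpace ℝ (Fin n)} (hx : x ∈ U) (hy : y ∈ U)
    (hmax : IsMaxOn (fun q => w q.1 - v q.2 - l * dist q.1 q.2 ^ 2) (U ×ˢ U) (x, y)) :
    f y ≤ g x := by
  have hmax_x : IsLocalMax (fun z => w z - l * dist z y ^ 2) x := by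
    filter_upwards [hU.mem_nhds hx] with z hz
    have := hmax (mk_mem_prod hz hy)
    simp only [Set.mem_ofPred_eq] at this
    linarith
  have hmin_y : IsLocalMin (fun z => v z - -l * dist z x ^ 2) y := by
    filter_upwards [hU.mem_nhds hy] with z hz
    have := hmax (mk_mem_prod hx hz)
    simp only [Set.mem_ofPred_eq, dist_comm x] at this
    linarith
  have hgx := hw.2 _ (contDiff_const_mul_dist_sq l y) x hx hmax_x
  have hfy := hv.2 _ (contDiff_const_mul_dist_sq (-l) x) y hy hmin_y
  rw [norm_fderiv_const_mul_dist_sq] at hgx hfy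
  rw [abs_neg, dist_comm] at hfy
  exact hfy.trans hgx

theorem IsViscositySubsolutionEikonal.le_of_supersolution_of_lt (hU : IsOpen U)
    (hUb : Bornology.IsBounded U) (hf : ContinuousOn f (closure U))
    (hg : ContinuousOn g (closure U)) (hgf : ∀ x ∈ U, g x < f x)
    (hwc : ContinuousOn w (closure U)) (hvc : ContinuousOn v (closure U))
    (hw : IsViscositySubsolutionEikonal n U g w) (hv : IsViscositySupersolutionEikonal n U f v) :
    ∀ x ∈ U, w x ≤ v x := by
  intro x₀ hx₀
  by_contra! hlt
  have hK : IsCompact (closure U) := hUb.isCompact_closure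
  have hmax : ∀ k : ℕ, ∃ p ∈ closure U ×ˢ closure U, IsMaxOn
      (fun q => w q.1 - v q.2 - k * dist q.1 q.2 ^ 2) (closure U ×ˢ closure U) p := fun k =>
    (hK.prod hK).exists_isMaxOn ⟨_, mk_mem_prod (subset_closure hx₀) (subset_closure hx₀)⟩
      (((hwc.comp continuousOn_fst fun _ hq => hq.1).sub
        (hvc.comp continuousOn_snd fun _ hq => hq.2)).sub (by fun_prop))
  choose p hpK hp using hmax
  obtain ⟨z, hzK, φ, hφ, hlim, hz⟩ :=
    hK.exists_subseq_tendsto_diag_of_isMaxOn_penalized hwc hvc hpK hp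
  have hzU : z ∈ U := by
    by_contra hzU
    have hzfr : z ∈ frontier U := hU.frontier_eq ▸ ⟨hzK, hzU⟩
    have := hz (subset_closure hx₀)
    simp only [Set.mem_ofPred_eq] at this
    linarith [hw.1 z hzfr, hv.1 z hzfr]
  have hev : ∀ᶠ k in atTop, f (p (φ k)).2 ≤ g (p (φ k)).1 := by
    filter_upwards [hlim.eventually ((hU.prod hU).mem_nhds (mk_mem_prod hzU hzU))] with k hk
    exact hw.le_of_isMaxOn_penalized hU hv hk.1 hk.2
      ((hp (φ k)).on_subset (prod_mono subset_closure subset_closure))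
  have hfz := (hf z hzK).tendsto.comp
    (tendsto_nhdsWithin_iff.2 ⟨hlim.snd_nhds, .of_forall fun k => (hpK (φ k)).2⟩)
  have hgz := (hg z hzK).tendsto.comp
    (tendsto_nhdsWithin_iff.2 ⟨hlim.fst_nhds, .of_forall fun k => (hpK (φ k)).1⟩)
  exact (hgf z hzU).not_ge (le_of_tendsto_of_tendsto hfz hgz hev)

theorem IsViscositySolutionEikonal.le (hU : IsOpen U) (hUb : Bornology.IsBounded U)
    (hf : ContinuousOn f (closure U)) (hf0 : ∀ x ∈ U, 0 < f x)
    (hw : IsViscositySolutionEikonal n U f w) (hv : IsViscositySolutionEikonal n U f v) :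
    ∀ x ∈ U, w x ≤ v x := by
  intro x hx
  have hscaled : ∀ s ∈ Ioo (0 : ℝ) 1, s * w x ≤ v x := fun s hs =>
    (hw.2.2.1.const_mul hs.1).le_of_supersolution_of_lt hU hUb hf (continuousOn_const.mul hf)
      (fun y hy => mul_lt_of_lt_one_left (hf0 y hy) hs.2)
      (continuousOn_const.mul hw.1.continuousOn) hv.1.continuousOn hv.2.2.2 x hx
  have hlim : Tendsto (fun s : ℝ => s * w x) (𝓝[<] 1) (𝓝 (w x)) := by
    simpa using (tendsto_id.mul_const (w x)).mono_left (nhdsWithin_le_nhds (a := (1 : ℝ)))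
  exact le_of_tendsto hlim (eventually_of_mem (Ioo_mem_nhdsLT one_pos) hscaled)

end Eikonal

/-- let `U ⊆ ℝⁿ` be open and bounded and `f` continuous on `closure U`
with `f(x) > 0` for every `x ∈ U`. Then any two viscosity solutions of `|Du| = f` in
`U` with zero Dirichlet boundary data coincide on `U`: the viscosity solution, if it
exists, is unique. -/
theorem eikonal_uniqueness_positive_f
    (n : ℕ) (U : Set (EuclideanSpace ℝ (Fin n)))
    (hUopen : IsOpen U) (hUbdd : Bornology.IsBounded U)
    (f : EuclideanSpace ℝ (Fin n) → ℝ)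
    (hf : ContinuousOn f (closure U)) (hf0 : ∀ x ∈ U, 0 < f x)
    (u v : EuclideanSpace ℝ (Fin n) → ℝ)
    (hu : IsViscositySolutionEikonal n U f u)
    (hv : IsViscositySolutionEikonal n U f v) :
    ∀ x ∈ U, u x = v x := by
  intro x hx
  exact le_antisymm (hu.le hUopen hUbdd hf hf0 hv x hx) (hv.le hUopen hUbdd hf hf0 hu x hx)
end

section
/- If w : [−1,1] → ℝ is any viscosity solution of |w'| = 1 on (−1,1) with w(−1) = w(1) = 0, then w(x) = 1 − |x| for all x ∈ [−1,1]; i.e., the viscosity solution of this problem is unique. -/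
open Filter Set Real

/-- For a continuous `f : [-1,1] → ℝ` with `f ≥ 0`, a continuous function
`u : [-1,1] → ℝ` is a viscosity solution of `|u'| = f` on `(-1,1)` with
`u(-1) = u(1) = 0` if `u(-1) = u(1) = 0` and: (subsolution property) for every
continuously differentiable `φ` and every `x₀ ∈ (-1,1)` at which `u - φ` attains a
local maximum, `|φ'(x₀)| ≤ f(x₀)`; (supersolution property) for every such `φ` and
every `x₀ ∈ (-1,1)` at which `u - φ` attains a local minimum, `|φ'(x₀)| ≥ f(x₀)`. -/
def IsViscositySolution1D (f u : ℝ → ℝ) : Prop :=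
  ContinuousOn u (Set.Icc (-1 : ℝ) 1) ∧ u (-1) = 0 ∧ u 1 = 0 ∧
    (∀ φ : ℝ → ℝ, ContDiff ℝ 1 φ → ∀ x₀ ∈ Set.Ioo (-1 : ℝ) 1,
      IsLocalMax (fun x => u x - φ x) x₀ → |deriv φ x₀| ≤ f x₀) ∧
    (∀ φ : ℝ → ℝ, ContDiff ℝ 1 φ → ∀ x₀ ∈ Set.Ioo (-1 : ℝ) 1,
      IsLocalMin (fun x => u x - φ x) x₀ → f x₀ ≤ |deriv φ x₀|)

/-- any viscosity solution `w` of `|w'| = 1` on `(-1,1)` with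
`w(-1) = w(1) = 0` equals `1 - |x|` on `[-1,1]`; i.e., the viscosity solution of this
problem is unique. -/
theorem eikonal_1d_tent_is_unique_viscosity_solution
    (w : ℝ → ℝ) (hw : IsViscositySolution1D (fun _ : ℝ => 1) w) :
    ∀ x ∈ Set.Icc (-1 : ℝ) 1, w x = 1 - |x| := by
  obtain ⟨hc, hm1, h1, hsub, hsup⟩ := hw
  have hne : (Set.Icc (-1:ℝ) 1).Nonempty := ⟨0, by norm_num⟩
  -- Upper bound 1 : w x ≤ (1+ε)(x+1)
  have upper1 : ∀ ε > (0:ℝ), ∀ x ∈ Set.Icc (-1:ℝ) 1, w x ≤ (1+ε)*(x+1) := by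
    intro ε hε
    set φ : ℝ → ℝ := fun x => (1+ε)*(x+1) with hφdef
    have hφ : ContDiff ℝ 1 φ := by fun_prop
    have hg : ContinuousOn (fun x => w x - φ x) (Set.Icc (-1:ℝ) 1) :=
      hc.sub (by fun_prop)
    obtain ⟨x₀, hx₀, hmax⟩ := isCompact_Icc.exists_isMaxOn hne hg
    have hval : w x₀ - φ x₀ ≤ 0 := by
      by_cases hio : x₀ ∈ Set.Ioo (-1:ℝ) 1
      · exfalso
        have hloc : IsLocalMax (fun x => w x - φ x) x₀ :=
          hmax.isLocalMax (Icc_mem_nhds hio.1 hio.2)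
        have hle : |deriv φ x₀| ≤ 1 := hsub φ hφ x₀ hio hloc
        have hd : deriv φ x₀ = 1+ε := by
          have h' : HasDerivAt φ ((1+ε)*1) x₀ :=
            ((hasDerivAt_id x₀).add_const 1).const_mul (1+ε)
          simpa using h'.deriv
        rw [hd, abs_of_pos (by linarith)] at hle
        linarith
      · have hb : x₀ = -1 ∨ x₀ = 1 := by
          rcases hx₀ with ⟨ha, hb⟩
          rcases ha.lt_or_eq with h | h
          · rcases hb.lt_or_eq with h' | h'
            · exact absurd ⟨h, h'⟩ hio
            · exact Or.inr h'
          · exact Or.inl h.symm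
        rcases hb with rfl | rfl
        · simp [hφdef, hm1]
        · simp only [hφdef, h1]
          nlinarith
    intro x hx
    have hthis : w x - φ x ≤ w x₀ - φ x₀ := hmax hx
    show w x ≤ φ x
    linarith
  -- Upper bound 2 : w x ≤ (1+ε)(1-x)
  have upper2 : ∀ ε > (0:ℝ), ∀ x ∈ Set.Icc (-1:ℝ) 1, w x ≤ (1+ε)*(1-x) := by
    intro ε hε
    set φ : ℝ → ℝ := fun x => (1+ε)*(1-x) with hφdef
    have hφ : ContDiff ℝ 1 φ := by fun_prop
    have hg : ContinuousOn (fun x => w x - φ x) (Set.Icc (-1:ℝ) 1) :=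
      hc.sub (by fun_prop)
    obtain ⟨x₀, hx₀, hmax⟩ := isCompact_Icc.exists_isMaxOn hne hg
    have hval : w x₀ - φ x₀ ≤ 0 := by
      by_cases hio : x₀ ∈ Set.Ioo (-1:ℝ) 1
      · exfalso
        have hloc : IsLocalMax (fun x => w x - φ x) x₀ :=
          hmax.isLocalMax (Icc_mem_nhds hio.1 hio.2)
        have hle : |deriv φ x₀| ≤ 1 := hsub φ hφ x₀ hio hloc
        have hd : deriv φ x₀ = -(1+ε) := by
          have h' : HasDerivAt φ ((1+ε)*(0-1)) x₀ :=
            ((hasDerivAt_const x₀ (1:ℝ)).sub (hasDerivAt_id x₀)).const_mul (1+ε)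
          have := h'.deriv
          rw [this]; ring
        rw [hd, abs_neg, abs_of_pos (by linarith)] at hle
        linarith
      · have hb : x₀ = -1 ∨ x₀ = 1 := by
          rcases hx₀ with ⟨ha, hb⟩
          rcases ha.lt_or_eq with h | h
          · rcases hb.lt_or_eq with h' | h'
            · exact absurd ⟨h, h'⟩ hio
            · exact Or.inr h'
          · exact Or.inl h.symm
        rcases hb with rfl | rfl
        · simp only [hφdef, hm1]
          nlinarith
        · simp [hφdef, h1]
    intro x hx
    have hthis : w x - φ x ≤ w x₀ - φ x₀ := hmax hx
    show w x ≤ φ x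
    linarith
  -- Lower bound : (1-ε)(1 - √(x²+δ)) ≤ w x
  have lower : ∀ ε ∈ Set.Ioo (0:ℝ) 1, ∀ δ > (0:ℝ), ∀ x ∈ Set.Icc (-1:ℝ) 1,
      (1-ε)*(1 - Real.sqrt (x^2+δ)) ≤ w x := by
    intro ε hε δ hδ
    have hpos : ∀ x : ℝ, (0:ℝ) < x^2 + δ := fun x => by positivity
    set φ : ℝ → ℝ := fun x => (1-ε)*(1 - Real.sqrt (x^2+δ)) with hφdef
    have hsq : ContDiff ℝ 1 (fun x : ℝ => Real.sqrt (x^2+δ)) := by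
      rw [contDiff_iff_contDiffAt]
      intro x
      exact (Real.contDiffAt_sqrt (hpos x).ne').comp x (by fun_prop)
    have hφ : ContDiff ℝ 1 φ :=
      contDiff_const.mul (contDiff_const.sub hsq)
    have hg : ContinuousOn (fun x => w x - φ x) (Set.Icc (-1:ℝ) 1) :=
      hc.sub hφ.continuous.continuousOn
    obtain ⟨x₀, hx₀, hmin⟩ := isCompact_Icc.exists_isMinOn hne hg
    have hval : 0 ≤ w x₀ - φ x₀ := by
      by_cases hio : x₀ ∈ Set.Ioo (-1:ℝ) 1
      · exfalso
        have hloc : IsLocalMin (fun x => w x - φ x) x₀ :=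
          hmin.isLocalMin (Icc_mem_nhds hio.1 hio.2)
        have hge : (1:ℝ) ≤ |deriv φ x₀| := hsup φ hφ x₀ hio hloc
        have hS : HasDerivAt (fun x : ℝ => Real.sqrt (x^2+δ))
            (1 / (2 * Real.sqrt (x₀^2+δ)) * (2*x₀)) x₀ := by
          have hin : HasDerivAt (fun x : ℝ => x^2+δ) (2*x₀) x₀ := by
            have := (hasDerivAt_pow 2 x₀).add_const δ
            simpa using this
          exact (Real.hasDerivAt_sqrt (hpos x₀).ne').comp x₀ hin
        have hdφ : HasDerivAt φ ((1-ε)*(0 - (1 / (2 * Real.sqrt (x₀^2+δ)) * (2*x₀)))) x₀ :=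
          ((hasDerivAt_const x₀ (1:ℝ)).sub hS).const_mul (1-ε)
        have hd : deriv φ x₀ = -((1-ε) * (x₀ / Real.sqrt (x₀^2+δ))) := by
          rw [hdφ.deriv]
          have hs0 : Real.sqrt (x₀^2+δ) ≠ 0 := by
            positivity
          field_simp
          ring
        have hsle : |x₀| ≤ Real.sqrt (x₀^2+δ) := by
          have h1' : Real.sqrt (x₀^2) ≤ Real.sqrt (x₀^2+δ) :=
            Real.sqrt_le_sqrt (by linarith)
          rwa [Real.sqrt_sq_eq_abs] at h1'
        have hspos : 0 < Real.sqrt (x₀^2+δ) := Real.sqrt_pos.mpr (hpos x₀)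
        have habs : |deriv φ x₀| ≤ 1 - ε := by
          rw [hd, abs_neg, abs_mul, abs_of_pos (by linarith [hε.2] : (0:ℝ) < 1-ε),
            abs_div]
          rw [abs_of_pos hspos]
          have : |x₀| / Real.sqrt (x₀^2+δ) ≤ 1 :=
            (div_le_one hspos).mpr hsle
          nlinarith [hε.2]
        linarith [hε.1]
      · have hb : x₀ = -1 ∨ x₀ = 1 := by
          rcases hx₀ with ⟨ha, hb⟩
          rcases ha.lt_or_eq with h | h
          · rcases hb.lt_or_eq with h' | h'
            · exact absurd ⟨h, h'⟩ hio
            · exact Or.inr h'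
          · exact Or.inl h.symm
        have hs1 : (1:ℝ) ≤ Real.sqrt (1+δ) := by
          have := Real.sqrt_le_sqrt (show (1:ℝ) ≤ 1+δ by linarith)
          rwa [Real.sqrt_one] at this
        rcases hb with rfl | rfl
        · simp only [hφdef, hm1]
          have : ((-1:ℝ))^2 = 1 := by norm_num
          rw [this]
          nlinarith [hε.2]
        · simp only [hφdef, h1, one_pow]
          nlinarith [hε.2]
    intro x hx
    have hthis : w x₀ - φ x₀ ≤ w x - φ x := hmin hx
    show φ x ≤ w x
    linarith
  -- Conclusion
  intro x hx
  have hxabs : |x| ≤ 1 := abs_le.mpr ⟨hx.1, hx.2⟩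
  have hub : w x ≤ 1 - |x| := by
    have h1' : w x ≤ x + 1 := by
      apply le_of_forall_pos_le_add
      intro η hη
      have := upper1 (η/2) (by linarith) x hx
      nlinarith [hx.1, hx.2]
    have h2' : w x ≤ 1 - x := by
      apply le_of_forall_pos_le_add
      intro η hη
      have := upper2 (η/2) (by linarith) x hx
      nlinarith [hx.1, hx.2]
    rcases abs_cases x with ⟨he, _⟩ | ⟨he, _⟩ <;> rw [he] <;> linarith
  have hlb : 1 - |x| ≤ w x := by
    apply le_of_forall_pos_le_add
    intro η hη
    set ε := min (η/2) (1/2) with hεdef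
    have hε : ε ∈ Set.Ioo (0:ℝ) 1 := by
      constructor
      · exact lt_min (by linarith) (by norm_num)
      · exact lt_of_le_of_lt (min_le_right _ _) (by norm_num)
    set δ := (η/4)^2 with hδdef
    have hδ : (0:ℝ) < δ := by positivity
    have hw' := lower ε hε δ hδ x hx
    have hsd : Real.sqrt (x^2+δ) ≤ |x| + η/4 := by
      have h1' : x^2 + δ ≤ (|x| + η/4)^2 := by
        have : x^2 = |x|^2 := (sq_abs x).symm
        nlinarith [abs_nonneg x]
      have := Real.sqrt_le_sqrt h1'
      rwa [Real.sqrt_sq (by positivity)] at this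
    have hεle : ε ≤ η/2 := min_le_left _ _
    have h1e : 1 - Real.sqrt (x^2+δ) ≥ 1 - |x| - η/4 := by linarith
    have hfac : (0:ℝ) ≤ 1 - ε := by linarith [hε.2]
    have : (1-ε)*(1 - |x| - η/4) ≤ (1-ε)*(1 - Real.sqrt (x^2+δ)) :=
      mul_le_mul_of_nonneg_left h1e hfac
    nlinarith [hε.1, abs_nonneg x]
  linarith
end
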